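/- arXiv:2208.07967 — 7 statements merged into one kernel-verified Lean document; each statement's English description precedes it below -/
import Mathlib

section
/- Let K be a compact Hausdorff space and let f and g be two non-zero elements of the closed unit ball B of C(K). Then B is contained in the union of the closed balls of radius 1 centered at f and at g if and only if there exist an isolated point u of K and real numbers c, d with cd < 0 such that f = c·1_{u} and g = d·1_{u}, where 1_{u} denotes the indicator function of {u}. -/
open Set Metric

section CoverAux

variable {K : Type*} [TopologicalSpace K] [CompactSpace K] [T2Space K]

omit [T2Space K] in
private lemma mem_ball_iff_ptwise (f : C(K, ℝ)) :
    f ∈ Metric.closedBall (0 : C(K, ℝ)) 1 ↔ ∀ x, |f x| ≤ 1 := by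
  rw [Metric.mem_closedBall, dist_zero_right]
  constructor
  · intro h x
    simpa using (ContinuousMap.norm_coe_le_norm f x).trans h
  · intro h
    exact (ContinuousMap.norm_le f zero_le_one).2 fun x => by simpa using h x

private lemma exists_pm (u v : K) (huv : u ≠ v) :
    ∃ h : C(K, ℝ), (∀ x, |h x| ≤ 1) ∧ h u = -1 ∧ h v = 1 := by
  obtain ⟨φ, hφu, hφv, hφ⟩ := exists_continuous_zero_one_of_isClosed
    (isClosed_singleton (x := u)) (isClosed_singleton (x := v)) (by simpa using huv)
  refine ⟨(2 : ℝ) • φ - 1, ?_, ?_, ?_⟩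
  · intro x
    have := hφ x
    simp only [Set.mem_Icc] at this
    simp only [ContinuousMap.sub_apply, ContinuousMap.smul_apply, ContinuousMap.one_apply,
      smul_eq_mul]
    rw [abs_le]; constructor <;> linarith [this.1, this.2]
  · have h0 : φ u = 0 := hφu rfl
    simp [h0]
  · have h1 : φ v = 1 := hφv rfl
    simp [h1]; norm_num

private lemma key (f g : C(K, ℝ)) (hg0 : g ≠ 0)
    (cover : ∀ h : C(K, ℝ), (∀ x, |h x| ≤ 1) →
      (∀ x, |h x - f x| ≤ 1) ∨ (∀ x, |h x - g x| ≤ 1))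
    (hfpos : ∃ x, 0 < f x) :
    ∃ u : K, IsOpen ({u} : Set K) ∧ 0 < f u ∧ g u < 0 ∧
      (∀ x, x ≠ u → f x = 0) ∧ (∀ x, x ≠ u → g x = 0) := by
  obtain ⟨x₀, hx₀⟩ := hfpos
  -- constant -1 shows g ≤ 0
  have hgle : ∀ x, g x ≤ 0 := by
    rcases cover (ContinuousMap.const K (-1)) (fun x => by simp) with h | h
    · exfalso
      have := h x₀
      simp only [ContinuousMap.const_apply] at this
      rw [abs_le] at this
      linarith
    · intro x
      have := h x
      simp only [ContinuousMap.const_apply] at this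
      rw [abs_le] at this
      linarith
  -- g nonzero gives a strictly negative value
  have hgneg : ∃ v, g v < 0 := by
    by_contra hc
    push_neg at hc
    exact hg0 (ContinuousMap.ext fun x => le_antisymm (hgle x) (hc x))
  obtain ⟨v₀, hv₀⟩ := hgneg
  -- constant 1 shows f ≥ 0
  have hfge : ∀ x, 0 ≤ f x := by
    rcases cover (ContinuousMap.const K 1) (fun x => by simp) with h | h
    · intro x
      have := h x
      simp only [ContinuousMap.const_apply] at this
      rw [abs_le] at this
      linarith
    · exfalso
      have := h v₀
      simp only [ContinuousMap.const_apply] at this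
      rw [abs_le] at this
      linarith
  -- key claim: points where f > 0 and points where g < 0 coincide
  have claim : ∀ a b, 0 < f a → g b < 0 → a = b := by
    intro a b ha hb
    by_contra hab
    obtain ⟨h, hh1, hha, hhb⟩ := exists_pm a b hab
    rcases cover h hh1 with hc | hc
    · have := hc a
      rw [hha, abs_le] at this
      linarith
    · have := hc b
      rw [hhb, abs_le] at this
      linarith
  have huv : x₀ = v₀ := claim x₀ v₀ hx₀ hv₀
  subst huv
  have hfz : ∀ x, x ≠ x₀ → f x = 0 := by
    intro x hx
    by_contra hfx
    have : 0 < f x := lt_of_le_of_ne (hfge x) (Ne.symm hfx)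
    exact hx (claim x x₀ this hv₀)
  have hgz : ∀ x, x ≠ x₀ → g x = 0 := by
    intro x hx
    by_contra hgx
    have : g x < 0 := lt_of_le_of_ne (hgle x) hgx
    exact hx ((claim x₀ x hx₀ this).symm)
  refine ⟨x₀, ?_, hx₀, hv₀, hfz, hgz⟩
  have : ({x₀} : Set K) = f ⁻¹' ({0}ᶜ) := by
    ext x
    simp only [mem_singleton_iff, mem_preimage, mem_compl_iff, mem_singleton_iff]
    constructor
    · rintro rfl; exact ne_of_gt hx₀
    · intro hx
      by_contra hne
      exact hx (hfz x hne)
  rw [this]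
  exact isOpen_compl_singleton.preimage f.continuous

end CoverAux

/-- For nonzero `f, g` in the closed unit ball `B` of `C(K)` (`K` compact Hausdorff),
the balls `closedBall f 1` and `closedBall g 1` cover `B` iff there is an isolated point `u`
of `K` and reals `c, d` with `c * d < 0` such that `f = c • 𝟙_{u}` and `g = d • 𝟙_{u}`. -/
theorem covering_by_two_balls_iff_indicator
    (K : Type*) [TopologicalSpace K] [CompactSpace K] [T2Space K]
    (f g : C(K, ℝ)) (hf0 : f ≠ 0) (hg0 : g ≠ 0)
    (hf : f ∈ Metric.closedBall (0 : C(K, ℝ)) 1) (hg : g ∈ Metric.closedBall (0 : C(K, ℝ)) 1) :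
    Metric.closedBall (0 : C(K, ℝ)) 1 ⊆ Metric.closedBall f 1 ∪ Metric.closedBall g 1 ↔
      ∃ (u : K) (c d : ℝ), IsOpen ({u} : Set K) ∧ c * d < 0 ∧
        (∀ x : K, f x = ({u} : Set K).indicator (fun _ => c) x) ∧
        (∀ x : K, g x = ({u} : Set K).indicator (fun _ => d) x) := by
  constructor
  · intro cover
    -- pointwise form of the covering condition
    have cover' : ∀ h : C(K, ℝ), (∀ x, |h x| ≤ 1) →
        (∀ x, |h x - f x| ≤ 1) ∨ (∀ x, |h x - g x| ≤ 1) := by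
      intro h hh
      rcases cover ((mem_ball_iff_ptwise h).2 hh) with hc | hc
      · left
        intro x
        rw [Metric.mem_closedBall, dist_eq_norm] at hc
        simpa using (ContinuousMap.norm_coe_le_norm (h - f) x).trans hc
      · right
        intro x
        rw [Metric.mem_closedBall, dist_eq_norm] at hc
        simpa using (ContinuousMap.norm_coe_le_norm (h - g) x).trans hc
    -- assembly of conclusion from pointwise data
    have assemble : ∀ u : K, IsOpen ({u} : Set K) → f u * g u < 0 →
        (∀ x, x ≠ u → f x = 0) → (∀ x, x ≠ u → g x = 0) →
        ∃ (u : K) (c d : ℝ), IsOpen ({u} : Set K) ∧ c * d < 0 ∧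
          (∀ x : K, f x = ({u} : Set K).indicator (fun _ => c) x) ∧
          (∀ x : K, g x = ({u} : Set K).indicator (fun _ => d) x) := by
      intro u hopen hprod hfz hgz
      refine ⟨u, f u, g u, hopen, hprod, ?_, ?_⟩
      · intro x
        by_cases hx : x = u
        · subst hx; simp
        · rw [Set.indicator_of_notMem (by simpa using hx)]
          exact hfz x hx
      · intro x
        by_cases hx : x = u
        · subst hx; simp
        · rw [Set.indicator_of_notMem (by simpa using hx)]
          exact hgz x hx
    -- f is nonzero somewhere
    have : ∃ x, f x ≠ 0 := by
      by_contra hc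
      push_neg at hc
      exact hf0 (ContinuousMap.ext fun x => hc x)
    obtain ⟨x, hx⟩ := this
    rcases hx.lt_or_gt with hneg | hpos
    · -- apply key to -f, -g
      have hg0' : (-g : C(K, ℝ)) ≠ 0 := by simpa using neg_ne_zero.2 hg0
      have cover'' : ∀ h : C(K, ℝ), (∀ x, |h x| ≤ 1) →
          (∀ x, |h x - (-f : C(K, ℝ)) x| ≤ 1) ∨ (∀ x, |h x - (-g : C(K, ℝ)) x| ≤ 1) := by
        intro h hh
        rcases cover' (-h) (fun x => by simpa using hh x) with hc | hc
        · left
          intro y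
          have := hc y
          simp only [ContinuousMap.neg_apply] at this ⊢
          rw [show h y - -f y = -(-h y - f y) by ring, abs_neg]
          exact this
        · right
          intro y
          have := hc y
          simp only [ContinuousMap.neg_apply] at this ⊢
          rw [show h y - -g y = -(-h y - g y) by ring, abs_neg]
          exact this
      obtain ⟨u, hopen, hfu, hgu, hfz, hgz⟩ := key (-f) (-g) hg0' cover''
        ⟨x, by simpa using hneg⟩
      simp only [ContinuousMap.neg_apply, Left.nonneg_neg_iff, neg_pos, neg_neg,
        neg_eq_zero, neg_lt_zero] at hfu hgu hfz hgz
      exact assemble u hopen (mul_neg_of_neg_of_pos hfu hgu)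
        (fun y hy => hfz y hy) (fun y hy => hgz y hy)
    · obtain ⟨u, hopen, hfu, hgu, hfz, hgz⟩ := key f g hg0 cover' ⟨x, hpos⟩
      exact assemble u hopen (mul_neg_of_pos_of_neg hfu hgu) hfz hgz
  · rintro ⟨u, c, d, hopen, hcd, hfc, hgc⟩
    intro h hh
    have hh' : ∀ x, |h x| ≤ 1 := (mem_ball_iff_ptwise h).1 hh
    have hfu : f u = c := by rw [hfc u]; simp
    have hgu : g u = d := by rw [hgc u]; simp
    have hc1 : |c| ≤ 1 := hfu ▸ (mem_ball_iff_ptwise f).1 hf u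
    have hd1 : |d| ≤ 1 := hgu ▸ (mem_ball_iff_ptwise g).1 hg u
    have habs : ∀ (a b : ℝ), |a| ≤ 1 → |b| ≤ 1 → 0 ≤ a * b → |a - b| ≤ 1 := by
      intro a b ha hb hab
      rw [abs_le] at ha hb ⊢
      constructor <;> nlinarith [ha.1, ha.2, hb.1, hb.2]
    by_cases hsign : 0 ≤ h u * c
    · left
      rw [Metric.mem_closedBall, dist_eq_norm]
      refine (ContinuousMap.norm_le _ zero_le_one).2 fun x => ?_
      by_cases hx : x = u
      · subst hx
        simp only [ContinuousMap.sub_apply, Real.norm_eq_abs, hfu]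
        exact habs _ _ (hh' x) hc1 hsign
      · have hxu : x ∉ ({u} : Set K) := by simpa using hx
        simp only [ContinuousMap.sub_apply, Real.norm_eq_abs, hfc x,
          Set.indicator_of_notMem hxu]
        simpa using hh' x
    · right
      push_neg at hsign
      have hsd : 0 ≤ h u * d := by nlinarith [mul_pos_of_neg_of_neg hsign hcd, sq_nonneg c]
      rw [Metric.mem_closedBall, dist_eq_norm]
      refine (ContinuousMap.norm_le _ zero_le_one).2 fun x => ?_
      by_cases hx : x = u
      · subst hx
        simp only [ContinuousMap.sub_apply, Real.norm_eq_abs, hgu]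
        exact habs _ _ (hh' x) hd1 hsd
      · have hxu : x ∉ ({u} : Set K) := by simpa using hx
        simp only [ContinuousMap.sub_apply, Real.norm_eq_abs, hgc x,
          Set.indicator_of_notMem hxu]
        simpa using hh' x
end

section
/- Let K be a zero-dimensional compact Hausdorff space and let A ⊆ ℝ be a set with empty interior. Then the set D = { f ∈ C(K) : f(x) ∉ A for all x ∈ K } is dense in C(K). -/
/-- If `K` is a zero-dimensional compact Hausdorff space and `A ⊆ ℝ` has empty interior, then
the set of continuous functions avoiding `A` is dense in `C(K)`. -/
theorem dense_avoiding_set_CK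
    (K : Type*) [TopologicalSpace K] [CompactSpace K] [T2Space K]
    (hbasis : TopologicalSpace.IsTopologicalBasis {s : Set K | IsClopen s})
    (A : Set ℝ) (hA : interior A = ∅) :
    Dense {f : C(K, ℝ) | ∀ x : K, f x ∉ A} := by
  classical
  rw [Metric.dense_iff]
  intro f ε hε
  have hd : Dense Aᶜ := interior_eq_empty_iff_dense_compl.mp hA
  by_cases hK : Nonempty K
  · -- choose near values avoiding A
    have hcval : ∀ x : K, ∃ c : ℝ, c ∉ A ∧ dist c (f x) < ε / 4 := by
      intro x
      obtain ⟨c, hc, hcb⟩ := hd.exists_mem_open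
        (Metric.isOpen_ball : IsOpen (Metric.ball (f x) (ε / 4)))
        ⟨f x, Metric.mem_ball_self (by linarith)⟩
      exact ⟨c, hc, Metric.mem_ball.1 hcb⟩
    choose cval hcA hcd using hcval
    -- clopen neighborhoods where f varies little
    have hU : ∀ x : K, ∃ u : Set K, IsClopen u ∧ x ∈ u ∧
        u ⊆ f ⁻¹' Metric.ball (f x) (ε / 4) := by
      intro x
      obtain ⟨u, hu, hxu, husub⟩ := hbasis.exists_subset_of_mem_open
        (by simp [Metric.mem_ball_self, (by linarith : (0:ℝ) < ε/4)] :
          x ∈ f ⁻¹' Metric.ball (f x) (ε / 4))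
        (Metric.isOpen_ball.preimage f.continuous)
      exact ⟨u, hu, hxu, husub⟩
    choose U hUc hxU hUsub using hU
    obtain ⟨t, ht⟩ := isCompact_univ.elim_finite_subcover U
      (fun x => (hUc x).isOpen) (fun y _ => Set.mem_iUnion.2 ⟨y, hxU y⟩)
    obtain ⟨x₀⟩ := hK
    set l : List K := t.toList with hl
    set v : ℕ → K := fun i => l.getD i x₀ with hv
    have hP : ∀ y : K, ∃ i : ℕ, i < l.length ∧ y ∈ U (v i) := by
      intro y
      obtain ⟨x, hxt, hyx⟩ := Set.mem_iUnion₂.1 (ht (Set.mem_univ y))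
      obtain ⟨i, hi, hgx⟩ := List.mem_iff_getElem.1 (Finset.mem_toList.2 hxt)
      refine ⟨i, hi, ?_⟩
      have hvx : v i = x := by rw [hv]; simp only []; rw [List.getD_eq_getElem l x₀ hi, hgx]
      rwa [hvx]
    set idx : K → ℕ := fun y => Nat.find (hP y) with hidx
    have hidx_spec : ∀ y, idx y < l.length ∧ y ∈ U (v (idx y)) := fun y => Nat.find_spec (hP y)
    set g : K → ℝ := fun y => cval (v (idx y)) with hg
    have hglc : IsLocallyConstant g := by
      rw [IsLocallyConstant.iff_exists_open]
      intro y
      refine ⟨U (v (idx y)) \ ⋃ j ∈ Finset.range (idx y), U (v j),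
        (hUc _).isOpen.sdiff (isClopen_biUnion_finset fun j _ => hUc (v j)).isClosed, ?_, ?_⟩
      · refine ⟨(hidx_spec y).2, ?_⟩
        simp only [Set.mem_iUnion, Finset.mem_range, not_exists]
        intro j hj
        have := Nat.find_min (hP y) hj
        push_neg at this
        exact fun hmem => absurd hmem (this (lt_trans hj (hidx_spec y).1))
      · intro z hz
        have hzi : idx z = idx y := by
          rw [hidx]
          rw [Nat.find_eq_iff]
          constructor
          · exact ⟨(hidx_spec y).1, hz.1⟩
          · intro j hj hc
            have : z ∈ ⋃ j ∈ Finset.range (idx y), U (v j) :=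
              Set.mem_biUnion (Finset.mem_range.2 hj) hc.2
            exact hz.2 this
        simp [hg, hzi]
    set gc : C(K, ℝ) := ⟨g, hglc.continuous⟩ with hgc
    refine ⟨gc, Metric.mem_ball.2 ?_, fun y => hcA _⟩
    rw [ContinuousMap.dist_lt_iff hε]
    intro y
    have h1 : dist (f y) (f (v (idx y))) < ε / 4 := by
      have := hUsub (v (idx y)) (hidx_spec y).2
      simpa [Metric.mem_ball] using this
    have h2 : dist (cval (v (idx y))) (f (v (idx y))) < ε / 4 := hcd _
    calc dist (gc y) (f y) ≤ dist (cval (v (idx y))) (f (v (idx y))) + dist (f (v (idx y))) (f y) :=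
          dist_triangle _ _ _
      _ < ε / 4 + ε / 4 := by rw [dist_comm (f (v (idx y)))]; exact add_lt_add h2 h1
      _ < ε := by linarith
  · exact ⟨f, Metric.mem_ball_self hε, fun y => absurd ⟨y⟩ hK⟩
end

section
/- Let K be a zero-dimensional compact Hausdorff space whose set of isolated points is dense, B the closed unit ball of C(K), and Φ : B → B a non-expansive bijection satisfying properties (1)–(6). Then for all f, g ∈ B and every isolated point x of K: (a) if f(x) < 0 then Φ(f)(x) ∈ [f(x), 0]; (b) if f(x) > 0 then Φ(f)(x) ∈ [0, f(x)]; (c) if g(x) < 0 then Φ⁻¹(g)(x) ∈ [-1, g(x)]; (d) if g(x) > 0 then Φ⁻¹(g)(x) ∈ [g(x), 1]; (e) if g(x) = ±1 then Φ⁻¹(g)(x) = g(x). -/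
/-- Lemma 5 of the paper: basic order estimates for a non-expansive bijection `Φ` of the unit
ball of `C(K)` satisfying properties (1)–(6). -/
theorem Phi_basic_estimates
    (K : Type*) [TopologicalSpace K] [CompactSpace K] [T2Space K]
    (hbasis : TopologicalSpace.IsTopologicalBasis {s : Set K | IsClopen s})
    (hdense : Dense {x : K | IsOpen ({x} : Set K)})
    (Φ Ψ : ↥(Metric.closedBall (0 : C(K, ℝ)) 1) → ↥(Metric.closedBall (0 : C(K, ℝ)) 1))
    (hlip : LipschitzWith 1 Φ)
    (hinv₁ : Function.LeftInverse Ψ Φ) (hinv₂ : Function.RightInverse Ψ Φ)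
    (hP1 : ∀ (f : ↥(Metric.closedBall (0 : C(K, ℝ)) 1)) (x : K), IsOpen ({x} : Set K) →
      (f : C(K, ℝ)) x = 0 → (Φ f : C(K, ℝ)) x = 0)
    (hP2 : ∀ (f : ↥(Metric.closedBall (0 : C(K, ℝ)) 1)) (x : K), IsOpen ({x} : Set K) →
      (f : C(K, ℝ)) x < 0 → (Φ f : C(K, ℝ)) x ≤ 0)
    (hP3 : ∀ (f : ↥(Metric.closedBall (0 : C(K, ℝ)) 1)) (x : K), IsOpen ({x} : Set K) →
      (f : C(K, ℝ)) x > 0 → (Φ f : C(K, ℝ)) x ≥ 0)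
    (hP4 : ∀ (g : ↥(Metric.closedBall (0 : C(K, ℝ)) 1)) (x : K), IsOpen ({x} : Set K) →
      (g : C(K, ℝ)) x < 0 → (Ψ g : C(K, ℝ)) x < 0)
    (hP5 : ∀ (g : ↥(Metric.closedBall (0 : C(K, ℝ)) 1)) (x : K), IsOpen ({x} : Set K) →
      (g : C(K, ℝ)) x > 0 → (Ψ g : C(K, ℝ)) x > 0)
    (hP6 : ∀ g : ↥(Metric.closedBall (0 : C(K, ℝ)) 1),
      (∀ x : K, |(g : C(K, ℝ)) x| = 1) → Φ g = g)
    (f g : ↥(Metric.closedBall (0 : C(K, ℝ)) 1)) (x : K) (hx : IsOpen ({x} : Set K)) :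
    ((f : C(K, ℝ)) x < 0 → (Φ f : C(K, ℝ)) x ∈ Set.Icc ((f : C(K, ℝ)) x) 0) ∧
    ((f : C(K, ℝ)) x > 0 → (Φ f : C(K, ℝ)) x ∈ Set.Icc 0 ((f : C(K, ℝ)) x)) ∧
    ((g : C(K, ℝ)) x < 0 → (Ψ g : C(K, ℝ)) x ∈ Set.Icc (-1 : ℝ) ((g : C(K, ℝ)) x)) ∧
    ((g : C(K, ℝ)) x > 0 → (Ψ g : C(K, ℝ)) x ∈ Set.Icc ((g : C(K, ℝ)) x) (1 : ℝ)) ∧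
    (((g : C(K, ℝ)) x = 1 ∨ (g : C(K, ℝ)) x = -1) → (Ψ g : C(K, ℝ)) x = (g : C(K, ℝ)) x) := by
  classical
  have hcl : IsClopen ({x} : Set K) := ⟨isClosed_singleton, hx⟩
  have habs : ∀ (h : ↥(Metric.closedBall (0 : C(K, ℝ)) 1)) (y : K), |(h : C(K, ℝ)) y| ≤ 1 := by
    intro h y
    have hhnorm : ‖(h : C(K, ℝ))‖ ≤ 1 := by
      have := h.2
      rwa [Metric.mem_closedBall, dist_zero_right] at this
    calc |(h : C(K, ℝ)) y| = ‖(h : C(K, ℝ)) y‖ := rfl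
      _ ≤ ‖(h : C(K, ℝ))‖ := (h : C(K, ℝ)).norm_coe_le_norm y
      _ ≤ 1 := hhnorm
  have key : ∀ h : ↥(Metric.closedBall (0 : C(K, ℝ)) 1),
      |(Φ h : C(K, ℝ)) x| ≤ |(h : C(K, ℝ)) x| := by
    intro h
    have hcont : Continuous fun y => if y = x then (0:ℝ) else (h : C(K, ℝ)) y := by
      apply Continuous.if
      · intro a ha
        rw [Set.setOf_eq_eq_singleton, hcl.frontier_eq] at ha
        exact ha.elim
      · exact continuous_const
      · exact (h : C(K, ℝ)).continuous
    set h0 : C(K, ℝ) := ⟨fun y => if y = x then (0:ℝ) else (h : C(K, ℝ)) y, hcont⟩ with hh0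
    have h0mem : h0 ∈ Metric.closedBall (0 : C(K, ℝ)) 1 := by
      rw [Metric.mem_closedBall, dist_zero_right]
      refine (ContinuousMap.norm_le _ zero_le_one).mpr fun y => ?_
      by_cases hy : y = x <;> simp [hh0, hy, habs h y]
    have hval : ((⟨h0, h0mem⟩ : ↥(Metric.closedBall (0 : C(K, ℝ)) 1)) : C(K, ℝ)) x = 0 := by
      simp [hh0]
    have hΦ0 : (Φ ⟨h0, h0mem⟩ : C(K, ℝ)) x = 0 := hP1 _ x hx hval
    have hdist : dist (h : C(K, ℝ)) h0 ≤ |(h : C(K, ℝ)) x| := by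
      rw [dist_eq_norm]
      refine (ContinuousMap.norm_le _ (abs_nonneg _)).mpr fun y => ?_
      by_cases hy : y = x <;> simp [hh0, hy, ContinuousMap.sub_apply, abs_nonneg]
    calc |(Φ h : C(K, ℝ)) x| = dist ((Φ h : C(K, ℝ)) x) ((Φ ⟨h0, h0mem⟩ : C(K, ℝ)) x) := by
          rw [hΦ0, dist_zero_right]; rfl
      _ ≤ dist (Φ h : C(K, ℝ)) (Φ ⟨h0, h0mem⟩ : C(K, ℝ)) := ContinuousMap.dist_apply_le_dist x
      _ = dist (Φ h) (Φ ⟨h0, h0mem⟩) := (Subtype.dist_eq _ _).symm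
      _ ≤ 1 * dist h (⟨h0, h0mem⟩ : ↥(Metric.closedBall (0 : C(K, ℝ)) 1)) := hlip.dist_le_mul _ _
      _ = dist (h : C(K, ℝ)) h0 := by rw [one_mul, Subtype.dist_eq]
      _ ≤ |(h : C(K, ℝ)) x| := hdist
  have keyΨ : |(g : C(K, ℝ)) x| ≤ |(Ψ g : C(K, ℝ)) x| := by
    have := key (Ψ g)
    rwa [hinv₂ g] at this
  refine ⟨?_, ?_, ?_, ?_, ?_⟩
  · intro hf
    refine ⟨?_, hP2 f x hx hf⟩
    have h1 := key f
    have h2 := neg_abs_le ((Φ f : C(K, ℝ)) x)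
    rw [abs_of_neg hf] at h1
    linarith
  · intro hf
    refine ⟨hP3 f x hx hf, ?_⟩
    have h1 := key f
    have h2 := le_abs_self ((Φ f : C(K, ℝ)) x)
    rw [abs_of_pos hf] at h1
    linarith
  · intro hg
    have hΨ : (Ψ g : C(K, ℝ)) x < 0 := hP4 g x hx hg
    constructor
    · have := habs (Ψ g) x
      have := neg_abs_le ((Ψ g : C(K, ℝ)) x)
      linarith
    · rw [abs_of_neg hg, abs_of_neg hΨ] at keyΨ
      linarith
  · intro hg
    have hΨ : (Ψ g : C(K, ℝ)) x > 0 := hP5 g x hx hg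
    constructor
    · rw [abs_of_pos hg, abs_of_pos hΨ] at keyΨ
      linarith
    · have := habs (Ψ g) x
      have := le_abs_self ((Ψ g : C(K, ℝ)) x)
      linarith
  · rintro (hg | hg)
    · have hpos : (g : C(K, ℝ)) x > 0 := by rw [hg]; norm_num
      have hΨ : (Ψ g : C(K, ℝ)) x > 0 := hP5 g x hx hpos
      have := habs (Ψ g) x
      have := le_abs_self ((Ψ g : C(K, ℝ)) x)
      rw [abs_of_pos hpos, abs_of_pos hΨ] at keyΨ
      linarith
    · have hneg : (g : C(K, ℝ)) x < 0 := by rw [hg]; norm_num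
      have hΨ : (Ψ g : C(K, ℝ)) x < 0 := hP4 g x hx hneg
      have := habs (Ψ g) x
      have := neg_abs_le ((Ψ g : C(K, ℝ)) x)
      rw [abs_of_neg hneg, abs_of_neg hΨ] at keyΨ
      linarith
end

section
/- Let K be an infinite zero-dimensional compact Hausdorff space whose set of isolated points is dense, B the closed unit ball of C(K), and Φ : B → B a non-expansive bijection satisfying properties (1)–(6). Let f ∈ B be such that h = min{ |f(z)| : z ∈ K' } ≠ 0. Then for every isolated point x of K: (a) if |f(x)| < h then Φ(f)(x) = f(x); (b) if f(x) ≥ h then Φ(f)(x) ∈ [h, f(x)]; (c) if f(x) ≤ -h then Φ(f)(x) ∈ [f(x), -h]. -/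
set_option linter.unusedSectionVars false

open Set Metric

section Aux

variable {K : Type*} [TopologicalSpace K] [CompactSpace K] [T2Space K]

/-- A function that is locally constant (in the sense below) is continuous. -/
lemma cont_loc {F : K → ℝ}
    (h : ∀ z, ∃ U : Set K, IsOpen U ∧ z ∈ U ∧ ∀ w ∈ U, F w = F z) : Continuous F := by
  rw [continuous_iff_continuousAt]
  intro z
  obtain ⟨U, hU, hz, hconst⟩ := h z
  have hev : F =ᶠ[nhds z] (fun _ => F z) :=
    Filter.eventuallyEq_of_mem (hU.mem_nhds hz) (fun w hw => hconst w hw)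
  exact ContinuousAt.congr continuousAt_const hev.symm

/-- Clopen separation in a zero-dimensional compact space. -/
lemma clopen_sep (hbasis : TopologicalSpace.IsTopologicalBasis {s : Set K | IsClopen s})
    {C O : Set K} (hC : IsClosed C) (hO : IsOpen O) (hCO : C ⊆ O) :
    ∃ U : Set K, IsClopen U ∧ C ⊆ U ∧ U ⊆ O := by
  have hcp : IsCompact C := hC.isCompact
  have hex : ∀ z : C, ∃ V : Set K, IsClopen V ∧ (z : K) ∈ V ∧ V ⊆ O := by
    intro z
    obtain ⟨V, hV, hzV, hVO⟩ := hbasis.exists_subset_of_mem_open (hCO z.2) hO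
    exact ⟨V, hV, hzV, hVO⟩
  choose V hV1 hV2 hV3 using hex
  obtain ⟨t, ht⟩ := hcp.elim_finite_subcover (fun z : C => V z)
      (fun z => (hV1 z).isOpen) (fun z hz => mem_iUnion.2 ⟨⟨z, hz⟩, hV2 ⟨z, hz⟩⟩)
  refine ⟨⋃ z ∈ t, V z, ?_, ht, ?_⟩
  · exact t.finite_toSet.isClopen_biUnion (fun z _ => hV1 z)
  · intro w hw
    simp only [mem_iUnion] at hw
    obtain ⟨z, _, hwz⟩ := hw
    exact hV3 z hwz

/-- A closed set of isolated points is finite. -/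
lemma finite_iso {C : Set K} (hC : IsClosed C)
    (hiso : ∀ z ∈ C, IsOpen ({z} : Set K)) : C.Finite := by
  classical
  have hcp : IsCompact C := hC.isCompact
  obtain ⟨t, ht⟩ := hcp.elim_finite_subcover (fun z : C => ({(z : K)} : Set K))
      (fun z => hiso z z.2) (fun z hz => mem_iUnion.2 ⟨⟨z, hz⟩, rfl⟩)
  refine Set.Finite.subset (t.image (fun z : C => (z : K))).finite_toSet ?_
  intro w hw
  have := ht hw
  simp only [mem_iUnion] at this
  obtain ⟨z, hz, hwz⟩ := this
  simp only [mem_singleton_iff] at hwz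
  simp only [Finset.coe_image, Set.mem_image, Finset.mem_coe]
  exact ⟨z, hz, hwz.symm⟩

/-- Two continuous functions agreeing at all isolated points outside a closed set agree
outside that set, provided isolated points are dense. -/
lemma dense_ext (hdense : Dense {x : K | IsOpen ({x} : Set K)})
    {g₁ g₂ : C(K, ℝ)} {T : Set K} (hT : IsClosed T)
    (h : ∀ y, IsOpen ({y} : Set K) → y ∉ T → g₁ y = g₂ y) :
    ∀ y, y ∉ T → g₁ y = g₂ y := by
  intro y hy
  have hcl : y ∈ closure ({x : K | IsOpen ({x} : Set K)} ∩ Tᶜ) := by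
    rw [_root_.mem_closure_iff]
    intro o ho hyo
    have hne : (o ∩ Tᶜ).Nonempty := ⟨y, hyo, hy⟩
    obtain ⟨w, hw1, hw2⟩ := hdense.inter_open_nonempty (o ∩ Tᶜ) (ho.inter hT.isOpen_compl) hne
    exact ⟨w, hw1.1, hw2, hw1.2⟩
  have hsub : ({x : K | IsOpen ({x} : Set K)} ∩ Tᶜ) ⊆ {w | g₁ w = g₂ w} :=
    fun w hw => h w hw.1 hw.2
  have hclosed : IsClosed {w : K | g₁ w = g₂ w} :=
    isClosed_eq g₁.continuous g₂.continuous
  exact hclosed.closure_subset ((closure_mono hsub) hcl)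

/-- Pointwise bound for elements of the unit ball. -/
lemma ball_pt (a : ↥(Metric.closedBall (0 : C(K, ℝ)) 1)) (z : K) :
    |(a : C(K, ℝ)) z| ≤ 1 := by
  have h1 : dist (a : C(K, ℝ)) 0 ≤ 1 := by
    have := a.2; rwa [Metric.mem_closedBall] at this
  have h2 : dist ((a : C(K, ℝ)) z) ((0 : C(K, ℝ)) z) ≤ dist (a : C(K, ℝ)) 0 :=
    ContinuousMap.dist_apply_le_dist z
  simpa [Real.dist_eq] using h2.trans h1

lemma dist_le_of_pt {g₁ g₂ : C(K, ℝ)} {Cb : ℝ} (h0 : 0 ≤ Cb)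
    (h : ∀ z, |g₁ z - g₂ z| ≤ Cb) : dist g₁ g₂ ≤ Cb :=
  (ContinuousMap.dist_le h0).2 (fun z => by rw [Real.dist_eq]; exact h z)

lemma pt_le_dist (g₁ g₂ : C(K, ℝ)) (z : K) : |g₁ z - g₂ z| ≤ dist g₁ g₂ := by
  simpa [Real.dist_eq] using ContinuousMap.dist_apply_le_dist (f := g₁) (g := g₂) z

end Aux
section UL

variable {K : Type*} [TopologicalSpace K] [CompactSpace K] [T2Space K]

/-- Upper bound at isolated positive points: `Φ a y ≤ a y`. -/
lemma phi_le_at_pos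
    (hbasis : TopologicalSpace.IsTopologicalBasis {s : Set K | IsClopen s})
    (Φ : ↥(Metric.closedBall (0 : C(K, ℝ)) 1) → ↥(Metric.closedBall (0 : C(K, ℝ)) 1))
    (hlip : LipschitzWith 1 Φ)
    (hP6 : ∀ g : ↥(Metric.closedBall (0 : C(K, ℝ)) 1),
      (∀ x : K, |(g : C(K, ℝ)) x| = 1) → Φ g = g)
    (a : ↥(Metric.closedBall (0 : C(K, ℝ)) 1)) (y : K)
    (hy : IsOpen ({y} : Set K)) (hay : 0 < (a : C(K, ℝ)) y) :
    (Φ a : C(K, ℝ)) y ≤ (a : C(K, ℝ)) y := by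
  classical
  set A := (a : C(K, ℝ)) with hA
  have hCcl : IsClosed {z : K | 0 ≤ A z} := isClosed_le continuous_const A.continuous
  have hOop : IsOpen {z : K | -(A y) < A z} := isOpen_lt continuous_const A.continuous
  have hCO : {z : K | 0 ≤ A z} ⊆ {z : K | -(A y) < A z} := by
    intro z hz
    simp only [Set.mem_setOf_eq] at hz ⊢
    linarith
  obtain ⟨U, hU, hCU, hUO⟩ := clopen_sep hbasis hCcl hOop hCO
  set W : Set K := U ∩ {y}ᶜ with hW
  have hWclo : IsClopen W := hU.inter (IsClopen.compl ⟨isClosed_singleton, hy⟩)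
  set G : K → ℝ := fun z => if z ∈ W then 1 else -1 with hG
  have hGcont : Continuous G := by
    apply cont_loc
    intro z
    by_cases hz : z ∈ W
    · exact ⟨W, hWclo.isOpen, hz, fun w hw => by simp only [hG, if_pos hw, if_pos hz]⟩
    · refine ⟨Wᶜ, hWclo.isClosed.isOpen_compl, hz, fun w hw => ?_⟩
      simp only [Set.mem_compl_iff] at hw
      simp only [hG, if_neg hw, if_neg hz]
  set Gc : C(K, ℝ) := ⟨G, hGcont⟩ with hGc
  have hGval : ∀ z, Gc z = G z := fun z => rfl
  have hGmem : Gc ∈ Metric.closedBall (0 : C(K, ℝ)) 1 := by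
    rw [Metric.mem_closedBall]
    apply dist_le_of_pt zero_le_one
    intro z
    by_cases hz : z ∈ W <;>
      simp only [hGval, hG, if_pos, if_neg, hz, ContinuousMap.zero_apply, if_true, ite_false] <;>
      norm_num
  set gB : ↥(Metric.closedBall (0 : C(K, ℝ)) 1) := ⟨Gc, hGmem⟩ with hgB
  have hext : ∀ z : K, |(gB : C(K, ℝ)) z| = 1 := by
    intro z
    show |G z| = 1
    by_cases hz : z ∈ W <;> simp [hG, hz]
  have hfix : Φ gB = gB := hP6 gB hext
  have hdistaG : dist A Gc ≤ 1 + A y := by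
    apply dist_le_of_pt (by linarith)
    intro z
    have hb := abs_le.1 (ball_pt a z)
    by_cases hz : z ∈ W
    · have h1 : -(A y) < A z := hUO hz.1
      have h2 : G z = 1 := if_pos hz
      rw [hGval, h2, abs_le]
      constructor <;> linarith
    · have h2 : G z = -1 := if_neg hz
      rw [hGval, h2]
      by_cases hzy : z = y
      · subst hzy
        rw [abs_le]; constructor <;> linarith
      · have hzU : z ∉ U := fun hzU => hz ⟨hzU, hzy⟩
        have hz0 : ¬(0 ≤ A z) := fun h0 => hzU (hCU h0)
        push_neg at hz0
        rw [abs_le]; constructor <;> linarith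
  have hkey : |(Φ a : C(K, ℝ)) y - Gc y| ≤ 1 + A y := by
    calc |(Φ a : C(K, ℝ)) y - Gc y|
        = |(Φ a : C(K, ℝ)) y - (Φ gB : C(K, ℝ)) y| := by rw [hfix]
      _ ≤ dist ((Φ a) : C(K, ℝ)) ((Φ gB) : C(K, ℝ)) := pt_le_dist _ _ y
      _ = dist (Φ a) (Φ gB) := (Subtype.dist_eq _ _).symm
      _ ≤ (1 : NNReal) * dist a gB := hlip.dist_le_mul a gB
      _ = dist A Gc := by rw [NNReal.coe_one, one_mul, Subtype.dist_eq]
      _ ≤ 1 + A y := hdistaG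
  have hGy : Gc y = -1 := by
    have hyW : y ∉ W := fun hyW => hyW.2 rfl
    rw [hGval]; exact if_neg hyW
  rw [hGy] at hkey
  have h3 := le_abs_self ((Φ a : C(K, ℝ)) y - (-1))
  have : (Φ a : C(K, ℝ)) y - (-1) ≤ 1 + A y := h3.trans hkey
  linarith

/-- Lower bound at isolated negative points: `a y ≤ Φ a y`. -/
lemma phi_ge_at_neg
    (hbasis : TopologicalSpace.IsTopologicalBasis {s : Set K | IsClopen s})
    (Φ : ↥(Metric.closedBall (0 : C(K, ℝ)) 1) → ↥(Metric.closedBall (0 : C(K, ℝ)) 1))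
    (hlip : LipschitzWith 1 Φ)
    (hP6 : ∀ g : ↥(Metric.closedBall (0 : C(K, ℝ)) 1),
      (∀ x : K, |(g : C(K, ℝ)) x| = 1) → Φ g = g)
    (a : ↥(Metric.closedBall (0 : C(K, ℝ)) 1)) (y : K)
    (hy : IsOpen ({y} : Set K)) (hay : (a : C(K, ℝ)) y < 0) :
    (a : C(K, ℝ)) y ≤ (Φ a : C(K, ℝ)) y := by
  classical
  set A := (a : C(K, ℝ)) with hA
  have hCcl : IsClosed {z : K | A z ≤ 0} := isClosed_le A.continuous continuous_const
  have hOop : IsOpen {z : K | A z < -(A y)} := isOpen_lt A.continuous continuous_const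
  have hCO : {z : K | A z ≤ 0} ⊆ {z : K | A z < -(A y)} := by
    intro z hz
    simp only [Set.mem_setOf_eq] at hz ⊢
    linarith
  obtain ⟨U, hU, hCU, hUO⟩ := clopen_sep hbasis hCcl hOop hCO
  set W : Set K := U ∩ {y}ᶜ with hW
  have hWclo : IsClopen W := hU.inter (IsClopen.compl ⟨isClosed_singleton, hy⟩)
  set G : K → ℝ := fun z => if z ∈ W then -1 else 1 with hG
  have hGcont : Continuous G := by
    apply cont_loc
    intro z
    by_cases hz : z ∈ W
    · exact ⟨W, hWclo.isOpen, hz, fun w hw => by simp only [hG, if_pos hw, if_pos hz]⟩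
    · refine ⟨Wᶜ, hWclo.isClosed.isOpen_compl, hz, fun w hw => ?_⟩
      simp only [Set.mem_compl_iff] at hw
      simp only [hG, if_neg hw, if_neg hz]
  set Gc : C(K, ℝ) := ⟨G, hGcont⟩ with hGc
  have hGval : ∀ z, Gc z = G z := fun z => rfl
  have hGmem : Gc ∈ Metric.closedBall (0 : C(K, ℝ)) 1 := by
    rw [Metric.mem_closedBall]
    apply dist_le_of_pt zero_le_one
    intro z
    by_cases hz : z ∈ W <;>
      simp only [hGval, hG, if_pos, if_neg, hz, ContinuousMap.zero_apply, if_true, ite_false] <;>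
      norm_num
  set gB : ↥(Metric.closedBall (0 : C(K, ℝ)) 1) := ⟨Gc, hGmem⟩ with hgB
  have hext : ∀ z : K, |(gB : C(K, ℝ)) z| = 1 := by
    intro z
    show |G z| = 1
    by_cases hz : z ∈ W <;> simp [hG, hz]
  have hfix : Φ gB = gB := hP6 gB hext
  have hdistaG : dist A Gc ≤ 1 - A y := by
    apply dist_le_of_pt (by linarith)
    intro z
    have hb := abs_le.1 (ball_pt a z)
    by_cases hz : z ∈ W
    · have h1 : A z < -(A y) := hUO hz.1
      have h2 : G z = -1 := if_pos hz
      rw [hGval, h2, abs_le]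
      constructor <;> linarith
    · have h2 : G z = 1 := if_neg hz
      rw [hGval, h2]
      by_cases hzy : z = y
      · subst hzy
        rw [abs_le]; constructor <;> linarith
      · have hzU : z ∉ U := fun hzU => hz ⟨hzU, hzy⟩
        have hz0 : ¬(A z ≤ 0) := fun h0 => hzU (hCU h0)
        push_neg at hz0
        rw [abs_le]; constructor <;> linarith
  have hkey : |(Φ a : C(K, ℝ)) y - Gc y| ≤ 1 - A y := by
    calc |(Φ a : C(K, ℝ)) y - Gc y|
        = |(Φ a : C(K, ℝ)) y - (Φ gB : C(K, ℝ)) y| := by rw [hfix]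
      _ ≤ dist ((Φ a) : C(K, ℝ)) ((Φ gB) : C(K, ℝ)) := pt_le_dist _ _ y
      _ = dist (Φ a) (Φ gB) := (Subtype.dist_eq _ _).symm
      _ ≤ (1 : NNReal) * dist a gB := hlip.dist_le_mul a gB
      _ = dist A Gc := by rw [NNReal.coe_one, one_mul, Subtype.dist_eq]
      _ ≤ 1 - A y := hdistaG
  have hGy : Gc y = 1 := by
    have hyW : y ∉ W := fun hyW => hyW.2 rfl
    rw [hGval]; exact if_neg hyW
  rw [hGy] at hkey
  have h3 := neg_abs_le ((Φ a : C(K, ℝ)) y - 1)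
  have : -(1 - A y) ≤ (Φ a : C(K, ℝ)) y - 1 := by
    have := neg_le_neg hkey
    linarith [h3]
  linarith

end UL
section Fix

variable {K : Type*} [TopologicalSpace K] [CompactSpace K] [T2Space K]

/-- Ψ fixes every element of the ball which has modulus 1 outside a finite set of
isolated points. -/
lemma psi_fix
    (hbasis : TopologicalSpace.IsTopologicalBasis {s : Set K | IsClopen s})
    (hdense : Dense {x : K | IsOpen ({x} : Set K)})
    (Φ Ψ : ↥(Metric.closedBall (0 : C(K, ℝ)) 1) → ↥(Metric.closedBall (0 : C(K, ℝ)) 1))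
    (hlip : LipschitzWith 1 Φ)
    (hinv₂ : Function.RightInverse Ψ Φ)
    (hP1 : ∀ (f : ↥(Metric.closedBall (0 : C(K, ℝ)) 1)) (x : K), IsOpen ({x} : Set K) →
      (f : C(K, ℝ)) x = 0 → (Φ f : C(K, ℝ)) x = 0)
    (hP2 : ∀ (f : ↥(Metric.closedBall (0 : C(K, ℝ)) 1)) (x : K), IsOpen ({x} : Set K) →
      (f : C(K, ℝ)) x < 0 → (Φ f : C(K, ℝ)) x ≤ 0)
    (hP3 : ∀ (f : ↥(Metric.closedBall (0 : C(K, ℝ)) 1)) (x : K), IsOpen ({x} : Set K) →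
      (f : C(K, ℝ)) x > 0 → (Φ f : C(K, ℝ)) x ≥ 0)
    (hP4 : ∀ (g : ↥(Metric.closedBall (0 : C(K, ℝ)) 1)) (x : K), IsOpen ({x} : Set K) →
      (g : C(K, ℝ)) x < 0 → (Ψ g : C(K, ℝ)) x < 0)
    (hP5 : ∀ (g : ↥(Metric.closedBall (0 : C(K, ℝ)) 1)) (x : K), IsOpen ({x} : Set K) →
      (g : C(K, ℝ)) x > 0 → (Ψ g : C(K, ℝ)) x > 0)
    (hP6 : ∀ g : ↥(Metric.closedBall (0 : C(K, ℝ)) 1),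
      (∀ x : K, |(g : C(K, ℝ)) x| = 1) → Φ g = g) :
    ∀ (n : ℕ) (T : Finset K) (b : ↥(Metric.closedBall (0 : C(K, ℝ)) 1)), T.card ≤ n →
      (∀ z ∈ T, IsOpen ({z} : Set K)) →
      (∀ y, y ∉ T → |(b : C(K, ℝ)) y| = 1) →
      Ψ b = b := by
  intro n
  induction n using Nat.strong_induction_on with
  | _ n ih =>
  intro T b hcard hiso hout
  classical
  have hΦP : Φ (Ψ b) = b := hinv₂ b
  set P : ↥(Metric.closedBall (0 : C(K, ℝ)) 1) := Ψ b with hPdef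
  set PC : C(K, ℝ) := (P : C(K, ℝ)) with hPC
  set bC : C(K, ℝ) := (b : C(K, ℝ)) with hbC
  -- step 1 : equality at isolated points outside T
  have step1 : ∀ y, IsOpen ({y} : Set K) → y ∉ T → PC y = bC y := by
    intro y hyiso hyT
    have hb1 := hout y hyT
    rcases (abs_eq (zero_le_one)).1 hb1 with h1 | h1
    · have hpos : (b : C(K, ℝ)) y > 0 := by rw [← hbC, h1]; norm_num
      have hPpos : 0 < PC y := hP5 b y hyiso hpos
      have hle : (Φ P : C(K, ℝ)) y ≤ PC y := phi_le_at_pos hbasis Φ hlip hP6 P y hyiso hPpos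
      rw [hΦP, ← hbC] at hle
      have hub := (abs_le.1 (ball_pt P y)).2
      have : PC y = 1 := le_antisymm hub (by rw [← h1]; exact hle)
      rw [this, h1]
    · have hneg : (b : C(K, ℝ)) y < 0 := by rw [← hbC, h1]; norm_num
      have hPneg : PC y < 0 := hP4 b y hyiso hneg
      have hge : PC y ≤ (Φ P : C(K, ℝ)) y := phi_ge_at_neg hbasis Φ hlip hP6 P y hyiso hPneg
      rw [hΦP, ← hbC] at hge
      have hlb := (abs_le.1 (ball_pt P y)).1
      have : PC y = -1 := le_antisymm (by rw [← h1]; exact hge) hlb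
      rw [this, h1]
  -- step 1' : equality everywhere outside T
  have step1' : ∀ y, y ∉ T → PC y = bC y := by
    have hTcl : IsClosed ((T : Finset K) : Set K) := T.finite_toSet.isClosed
    intro y hy
    exact dense_ext hdense hTcl
      (fun w hw1 hw2 => step1 w hw1 (by simpa using hw2)) y (by simpa using hy)
  -- step 2 : dominance at points of T
  have step2 : ∀ z ∈ T, PC z = bC z ∨ (0 ≤ bC z ∧ bC z < PC z) ∨ (PC z < bC z ∧ bC z ≤ 0) := by
    intro z hz
    have hziso := hiso z hz
    rcases lt_trichotomy (PC z) 0 with hneg | hzero | hpos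
    · have h1 : (Φ P : C(K, ℝ)) z ≤ 0 := hP2 P z hziso hneg
      have h2 : PC z ≤ (Φ P : C(K, ℝ)) z := phi_ge_at_neg hbasis Φ hlip hP6 P z hziso hneg
      rw [hΦP, ← hbC] at h1 h2
      rcases eq_or_lt_of_le h2 with he | hlt
      · exact Or.inl he
      · exact Or.inr (Or.inr ⟨hlt, h1⟩)
    · have h1 : (Φ P : C(K, ℝ)) z = 0 := hP1 P z hziso hzero
      rw [hΦP, ← hbC] at h1
      exact Or.inl (by rw [hzero, h1])
    · have h1 : (Φ P : C(K, ℝ)) z ≥ 0 := hP3 P z hziso hpos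
      have h2 : (Φ P : C(K, ℝ)) z ≤ PC z := phi_le_at_pos hbasis Φ hlip hP6 P z hziso hpos
      rw [hΦP, ← hbC] at h1 h2
      rcases eq_or_lt_of_le h2 with he | hlt
      · exact Or.inl he.symm
      · exact Or.inr (Or.inl ⟨h1, hlt⟩)
  -- the set of "jumps"
  set B' : Finset K := T.filter (fun z => PC z ≠ bC z) with hB'
  by_cases hBne : B'.Nonempty
  · exfalso
    obtain ⟨z₀, hz₀B, hz₀min⟩ := B'.exists_min_image (fun z => |PC z|) hBne
    have hBfact : ∀ z ∈ B', (0 ≤ bC z ∧ bC z < PC z) ∨ (PC z < bC z ∧ bC z ≤ 0) := by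
      intro z hzB
      have h1 := (Finset.mem_filter.1 hzB).1
      have h2 := (Finset.mem_filter.1 hzB).2
      rcases step2 z h1 with he | hr
      · exact absurd he h2
      · exact hr
    have habs : ∀ z ∈ B', |bC z| < |PC z| := by
      intro z hzB
      rcases hBfact z hzB with ⟨h0, hlt⟩ | ⟨hlt, h0⟩
      · rw [abs_of_nonneg h0, abs_of_pos (lt_of_le_of_lt h0 hlt)]; exact hlt
      · rw [abs_of_nonpos h0, abs_of_neg (lt_of_lt_of_le hlt h0)]; linarith
    -- the comparison function q
    set q : K → ℝ := fun z => if z ∈ B' then (if 0 < PC z then 1 else -1) else bC z with hq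
    have hqcont : Continuous q := by
      rw [continuous_iff_continuousAt]
      intro z
      by_cases hz : z ∈ B'
      · have hziso := hiso z (Finset.mem_filter.1 hz).1
        have hev : q =ᶠ[nhds z] (fun _ => q z) :=
          Filter.eventuallyEq_of_mem (hziso.mem_nhds rfl) (fun w hw => by
            simp only [Set.mem_singleton_iff] at hw; rw [hw])
        exact ContinuousAt.congr continuousAt_const hev.symm
      · have hopen : IsOpen ((↑B' : Set K)ᶜ) := B'.finite_toSet.isClosed.isOpen_compl
        have hev : q =ᶠ[nhds z] (fun w => bC w) :=
          Filter.eventuallyEq_of_mem (hopen.mem_nhds (by simpa using hz))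
            (fun w hw => by
              simp only [Set.mem_compl_iff, Finset.mem_coe] at hw
              simp only [hq, if_neg hw])
        exact ContinuousAt.congr bC.continuous.continuousAt hev.symm
    set qc : C(K, ℝ) := ⟨q, hqcont⟩ with hqc
    have hqval : ∀ z, qc z = q z := fun _ => rfl
    have hqapp : ∀ z, qc z = if z ∈ B' then (if 0 < PC z then (1 : ℝ) else -1) else bC z :=
      fun _ => rfl
    have hqmem : qc ∈ Metric.closedBall (0 : C(K, ℝ)) 1 := by
      rw [Metric.mem_closedBall]
      apply dist_le_of_pt zero_le_one
      intro z
      rw [ContinuousMap.zero_apply, sub_zero, hqapp]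
      by_cases hz : z ∈ B'
      · simp only [if_pos hz]
        by_cases hp : 0 < PC z <;> simp [hp]
      · simp only [if_neg hz]
        exact ball_pt b z
    set qB : ↥(Metric.closedBall (0 : C(K, ℝ)) 1) := ⟨qc, hqmem⟩ with hqB
    -- apply the induction hypothesis to q
    have hcard' : (T \ B').card < n := by
      have h1 : (T \ B') ⊂ T := by
        obtain ⟨w, hw⟩ := hBne
        refine Finset.ssubset_iff_of_subset (Finset.sdiff_subset) |>.2 ?_
        exact ⟨w, (Finset.mem_filter.1 hw).1, fun hcon => (Finset.mem_sdiff.1 hcon).2 hw⟩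
      exact lt_of_lt_of_le (Finset.card_lt_card h1) hcard
    have hqfix : Ψ qB = qB := by
      apply ih (T \ B').card hcard' (T \ B') qB le_rfl
        (fun z hz => hiso z (Finset.mem_sdiff.1 hz).1)
      intro y hy
      show |qc y| = 1
      rw [hqapp]
      by_cases hz : y ∈ B'
      · simp only [if_pos hz]
        by_cases hp : 0 < PC y <;> simp [hp]
      · simp only [if_neg hz]
        have hyT : y ∉ T := by
          intro hyT
          exact hy (Finset.mem_sdiff.2 ⟨hyT, hz⟩)
        exact hout y hyT
    have hΦq : Φ qB = qB := by
      conv_lhs => rw [← hqfix]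
      exact hinv₂ qB
    -- lower bound for dist bC qc
    have hz₀bd := abs_le.1 (ball_pt b z₀)
    have hlow : 1 - |bC z₀| ≤ dist bC qc := by
      have h1 : |bC z₀ - qc z₀| ≤ dist bC qc := pt_le_dist _ _ z₀
      have h2 : |bC z₀ - qc z₀| = 1 - |bC z₀| := by
        rw [hqapp, if_pos hz₀B]
        rcases hBfact z₀ hz₀B with ⟨h0, hlt⟩ | ⟨hlt, h0⟩
        · have hp : 0 < PC z₀ := lt_of_le_of_lt h0 hlt
          rw [if_pos hp, abs_of_nonpos (by linarith [hz₀bd.2] : bC z₀ - 1 ≤ 0),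
            abs_of_nonneg h0]
          ring
        · have hPz : PC z₀ < 0 := lt_of_lt_of_le hlt h0
          rw [if_neg (not_lt.2 hPz.le),
            abs_of_nonneg (by linarith [hz₀bd.1] : 0 ≤ bC z₀ - (-1)), abs_of_nonpos h0]
          ring
      rw [← h2]; exact h1
    -- upper bound for dist PC qc
    have hPz₀bd : |PC z₀| ≤ 1 := ball_pt P z₀
    have hup : dist PC qc ≤ 1 - |PC z₀| := by
      refine dist_le_of_pt (by linarith) ?_
      intro z
      by_cases hz : z ∈ B'
      · rw [hqapp, if_pos hz]
        have hmin := hz₀min z hz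
        have hPbd := abs_le.1 (ball_pt P z)
        rcases hBfact z hz with ⟨h0, hlt⟩ | ⟨hlt, h0⟩
        · have hp : 0 < PC z := lt_of_le_of_lt h0 hlt
          rw [if_pos hp, abs_of_nonpos (by linarith [hPbd.2] : PC z - 1 ≤ 0)]
          rw [abs_of_pos hp] at hmin
          linarith
        · have hPz : PC z < 0 := lt_of_lt_of_le hlt h0
          rw [if_neg (not_lt.2 hPz.le),
            abs_of_nonneg (by linarith [hPbd.1] : 0 ≤ PC z - (-1))]
          rw [abs_of_neg hPz] at hmin
          linarith
      · rw [hqapp, if_neg hz]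
        have heq : PC z = bC z := by
          by_cases hzT : z ∈ T
          · by_contra hne
            exact hz (Finset.mem_filter.2 ⟨hzT, hne⟩)
          · exact step1' z hzT
        rw [heq, sub_self, abs_zero]
        linarith
    -- the chain
    have hqBcoe : (qB : C(K, ℝ)) = qc := rfl
    have hchain : dist bC qc ≤ dist PC qc := by
      have h1 : dist (Φ P) (Φ qB) ≤ (1 : NNReal) * dist P qB := hlip.dist_le_mul _ _
      rw [Subtype.dist_eq, Subtype.dist_eq, NNReal.coe_one, one_mul, hΦP, hΦq, hqBcoe,
        ← hbC, ← hPC] at h1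
      exact h1
    have hj := habs z₀ hz₀B
    linarith [hlow, hchain, hup]
  · -- no jumps : Ψ b = b
    have hPb : ∀ z, PC z = bC z := by
      intro z
      by_cases hzT : z ∈ T
      · by_contra hne
        exact hBne ⟨z, Finset.mem_filter.2 ⟨hzT, hne⟩⟩
      · exact step1' z hzT
    apply Subtype.ext
    apply ContinuousMap.ext
    intro z
    exact hPb z

/-- Φ fixes every element of the ball which has modulus 1 outside a finite set of
isolated points. -/
lemma phi_fix
    (hbasis : TopologicalSpace.IsTopologicalBasis {s : Set K | IsClopen s})
    (hdense : Dense {x : K | IsOpen ({x} : Set K)})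
    (Φ Ψ : ↥(Metric.closedBall (0 : C(K, ℝ)) 1) → ↥(Metric.closedBall (0 : C(K, ℝ)) 1))
    (hlip : LipschitzWith 1 Φ)
    (hinv₂ : Function.RightInverse Ψ Φ)
    (hP1 : ∀ (f : ↥(Metric.closedBall (0 : C(K, ℝ)) 1)) (x : K), IsOpen ({x} : Set K) →
      (f : C(K, ℝ)) x = 0 → (Φ f : C(K, ℝ)) x = 0)
    (hP2 : ∀ (f : ↥(Metric.closedBall (0 : C(K, ℝ)) 1)) (x : K), IsOpen ({x} : Set K) →
      (f : C(K, ℝ)) x < 0 → (Φ f : C(K, ℝ)) x ≤ 0)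
    (hP3 : ∀ (f : ↥(Metric.closedBall (0 : C(K, ℝ)) 1)) (x : K), IsOpen ({x} : Set K) →
      (f : C(K, ℝ)) x > 0 → (Φ f : C(K, ℝ)) x ≥ 0)
    (hP4 : ∀ (g : ↥(Metric.closedBall (0 : C(K, ℝ)) 1)) (x : K), IsOpen ({x} : Set K) →
      (g : C(K, ℝ)) x < 0 → (Ψ g : C(K, ℝ)) x < 0)
    (hP5 : ∀ (g : ↥(Metric.closedBall (0 : C(K, ℝ)) 1)) (x : K), IsOpen ({x} : Set K) →
      (g : C(K, ℝ)) x > 0 → (Ψ g : C(K, ℝ)) x > 0)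
    (hP6 : ∀ g : ↥(Metric.closedBall (0 : C(K, ℝ)) 1),
      (∀ x : K, |(g : C(K, ℝ)) x| = 1) → Φ g = g)
    (T : Finset K) (b : ↥(Metric.closedBall (0 : C(K, ℝ)) 1))
    (hisoT : ∀ z ∈ T, IsOpen ({z} : Set K))
    (hout : ∀ y, y ∉ T → |(b : C(K, ℝ)) y| = 1) :
    Φ b = b := by
  have h := psi_fix hbasis hdense Φ Ψ hlip hinv₂ hP1 hP2 hP3 hP4 hP5 hP6 T.card T b le_rfl
    hisoT hout
  conv_lhs => rw [← h]
  exact hinv₂ b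

end Fix
/-- Lemma 8 of the paper (case `n = 0` of the main lemma). Here
`h = min { |f z| : z ∈ K' }` where `K'` denotes the set of accumulation points of `K`. -/
theorem Phi_main_lemma_case_zero
    (K : Type*) [TopologicalSpace K] [CompactSpace K] [T2Space K] [Infinite K]
    (hbasis : TopologicalSpace.IsTopologicalBasis {s : Set K | IsClopen s})
    (hdense : Dense {x : K | IsOpen ({x} : Set K)})
    (Φ Ψ : ↥(Metric.closedBall (0 : C(K, ℝ)) 1) → ↥(Metric.closedBall (0 : C(K, ℝ)) 1))
    (hlip : LipschitzWith 1 Φ)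
    (hinv₁ : Function.LeftInverse Ψ Φ) (hinv₂ : Function.RightInverse Ψ Φ)
    (hP1 : ∀ (f : ↥(Metric.closedBall (0 : C(K, ℝ)) 1)) (x : K), IsOpen ({x} : Set K) →
      (f : C(K, ℝ)) x = 0 → (Φ f : C(K, ℝ)) x = 0)
    (hP2 : ∀ (f : ↥(Metric.closedBall (0 : C(K, ℝ)) 1)) (x : K), IsOpen ({x} : Set K) →
      (f : C(K, ℝ)) x < 0 → (Φ f : C(K, ℝ)) x ≤ 0)
    (hP3 : ∀ (f : ↥(Metric.closedBall (0 : C(K, ℝ)) 1)) (x : K), IsOpen ({x} : Set K) →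
      (f : C(K, ℝ)) x > 0 → (Φ f : C(K, ℝ)) x ≥ 0)
    (hP4 : ∀ (g : ↥(Metric.closedBall (0 : C(K, ℝ)) 1)) (x : K), IsOpen ({x} : Set K) →
      (g : C(K, ℝ)) x < 0 → (Ψ g : C(K, ℝ)) x < 0)
    (hP5 : ∀ (g : ↥(Metric.closedBall (0 : C(K, ℝ)) 1)) (x : K), IsOpen ({x} : Set K) →
      (g : C(K, ℝ)) x > 0 → (Ψ g : C(K, ℝ)) x > 0)
    (hP6 : ∀ g : ↥(Metric.closedBall (0 : C(K, ℝ)) 1),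
      (∀ x : K, |(g : C(K, ℝ)) x| = 1) → Φ g = g)
    (f : ↥(Metric.closedBall (0 : C(K, ℝ)) 1)) (h : ℝ)
    (hh : h = sInf ((fun z => |(f : C(K, ℝ)) z|) '' {x : K | ¬ IsOpen ({x} : Set K)}))
    (hh0 : h ≠ 0)
    (x : K) (hx : IsOpen ({x} : Set K)) :
    (|(f : C(K, ℝ)) x| < h → (Φ f : C(K, ℝ)) x = (f : C(K, ℝ)) x) ∧
    ((f : C(K, ℝ)) x ≥ h → (Φ f : C(K, ℝ)) x ∈ Set.Icc h ((f : C(K, ℝ)) x)) ∧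
    ((f : C(K, ℝ)) x ≤ -h → (Φ f : C(K, ℝ)) x ∈ Set.Icc ((f : C(K, ℝ)) x) (-h)) := by
  classical
  set F : C(K, ℝ) := (f : C(K, ℝ)) with hF
  have himg_nonneg : ∀ a ∈ ((fun z => |F z|) '' {x : K | ¬ IsOpen ({x} : Set K)}), 0 ≤ a := by
    rintro a ⟨z, hz, rfl⟩
    exact abs_nonneg _
  have hnn : 0 ≤ h := by rw [hh]; exact Real.sInf_nonneg himg_nonneg
  have hpos : 0 < h := lt_of_le_of_ne hnn (Ne.symm hh0)
  have hK' : ∀ z : K, ¬ IsOpen ({z} : Set K) → h ≤ |F z| := by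
    intro z hz
    rw [hh]
    exact csInf_le ⟨0, fun a ha => himg_nonneg a ha⟩ ⟨z, hz, rfl⟩
  have hFbd : ∀ z, |F z| ≤ 1 := fun z => ball_pt f z
  have himg_ne : ((fun z => |F z|) '' {x : K | ¬ IsOpen ({x} : Set K)}).Nonempty := by
    by_contra hne
    rw [Set.not_nonempty_iff_eq_empty] at hne
    rw [hne, Real.sInf_empty] at hh
    exact hh0 hh
  have hh1 : h ≤ 1 := by
    obtain ⟨a, ⟨z, hz, rfl⟩⟩ := himg_ne
    exact (hK' z hz).trans (hFbd z)
  -- the key estimate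
  have key : ∀ θ : ℝ, 0 < θ → θ < h →
      min (F x) θ ≤ (Φ f : C(K, ℝ)) x ∧ (Φ f : C(K, ℝ)) x ≤ max (F x) (-θ) := by
    intro θ hθ0 hθh
    have hθ1 : θ < 1 := lt_of_lt_of_le hθh hh1
    set S : Set K := {z : K | |F z| ≤ θ} with hS
    have hScl : IsClosed S := isClosed_le F.continuous.abs continuous_const
    have hSiso : ∀ z ∈ S, IsOpen ({z} : Set K) := by
      intro z hz
      by_contra hniso
      have h1 : |F z| ≤ θ := hz
      linarith [hK' z hniso]
    have hSfin : S.Finite := finite_iso hScl hSiso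
    set T : Finset K := insert x hSfin.toFinset with hT
    have hTiso : ∀ z ∈ T, IsOpen ({z} : Set K) := by
      intro z hz
      rcases Finset.mem_insert.1 hz with rfl | hz
      · exact hx
      · exact hSiso z (hSfin.mem_toFinset.1 hz)
    have comp : ∀ s : ℝ, |s| = 1 →
        |(Φ f : C(K, ℝ)) x - s| ≤ max (|F x - s|) (1 - θ) := by
      intro s hs
      set G : K → ℝ := fun z => if z = x then s else if |F z| ≤ θ then F z
        else if 0 < F z then 1 else -1 with hG
      have hGapp : ∀ z, G z = if z = x then s else if |F z| ≤ θ then F z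
          else if 0 < F z then 1 else -1 := fun _ => rfl
      have hGcont : Continuous G := by
        apply cont_loc
        intro z
        by_cases hzx : z = x
        · refine ⟨{x}, hx, by rw [hzx]; rfl, fun w hw => ?_⟩
          rw [Set.mem_singleton_iff] at hw
          rw [hGapp, hGapp, if_pos hw, if_pos hzx]
        · by_cases hzS : |F z| ≤ θ
          · refine ⟨{z}, hSiso z hzS, rfl, fun w hw => ?_⟩
            rw [Set.mem_singleton_iff] at hw
            rw [hw]
          · by_cases hzpos : 0 < F z
            · have hzθ : θ < F z := by
                rcases abs_cases (F z) with ⟨he, _⟩ | ⟨he, _⟩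
                · rw [he] at hzS; linarith [not_le.1 hzS]
                · linarith
              refine ⟨{w | θ < F w} ∩ {x}ᶜ,
                (isOpen_lt continuous_const F.continuous).inter
                  (isClosed_singleton (x := x)).isOpen_compl, ⟨hzθ, hzx⟩, fun w hw => ?_⟩
              have hw1 : θ < F w := hw.1
              have hw2 : w ≠ x := hw.2
              have hwpos : 0 < F w := lt_trans hθ0 hw1
              have hwS : ¬ |F w| ≤ θ := by
                rw [abs_of_pos hwpos]; linarith
              rw [hGapp, hGapp, if_neg hw2, if_neg hwS, if_pos hwpos,
                if_neg hzx, if_neg hzS, if_pos hzpos]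
            · have hzθ : F z < -θ := by
                push_neg at hzpos
                rcases abs_cases (F z) with ⟨he, _⟩ | ⟨he, _⟩
                · linarith [not_le.1 hzS]
                · rw [he] at hzS; linarith [not_le.1 hzS]
              refine ⟨{w | F w < -θ} ∩ {x}ᶜ,
                (isOpen_lt F.continuous continuous_const).inter
                  (isClosed_singleton (x := x)).isOpen_compl, ⟨hzθ, hzx⟩, fun w hw => ?_⟩
              have hw1 : F w < -θ := hw.1
              have hw2 : w ≠ x := hw.2
              have hwneg : ¬ 0 < F w := by push_neg; linarith
              have hwS : ¬ |F w| ≤ θ := by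
                rw [abs_of_neg (by linarith : F w < 0)]; linarith
              rw [hGapp, hGapp, if_neg hw2, if_neg hwS, if_neg hwneg,
                if_neg hzx, if_neg hzS, if_neg hzpos]
      set Gc : C(K, ℝ) := ⟨G, hGcont⟩ with hGc
      have hGval : ∀ z, Gc z = G z := fun _ => rfl
      have hGmem : Gc ∈ Metric.closedBall (0 : C(K, ℝ)) 1 := by
        rw [Metric.mem_closedBall]
        apply dist_le_of_pt zero_le_one
        intro z
        rw [ContinuousMap.zero_apply, sub_zero, hGval, hGapp]
        by_cases hzx : z = x
        · rw [if_pos hzx, hs]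
        · rw [if_neg hzx]
          by_cases hzS : |F z| ≤ θ
          · rw [if_pos hzS]; exact hFbd z
          · rw [if_neg hzS]
            by_cases hzpos : 0 < F z <;> simp [hzpos]
      set GB : ↥(Metric.closedBall (0 : C(K, ℝ)) 1) := ⟨Gc, hGmem⟩ with hGB
      have hGBcoe : (GB : C(K, ℝ)) = Gc := rfl
      have hout : ∀ y, y ∉ T → |(GB : C(K, ℝ)) y| = 1 := by
        intro y hy
        have hyx : y ≠ x := by
          intro hc
          subst hc
          exact hy (Finset.mem_insert_self y _)
        have hyS : ¬ |F y| ≤ θ := by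
          intro hc
          exact hy (Finset.mem_insert.2 (Or.inr (hSfin.mem_toFinset.2 hc)))
        rw [hGBcoe, hGval, hGapp, if_neg hyx, if_neg hyS]
        by_cases hzpos : 0 < F y <;> simp [hzpos]
      have hfixG : Φ GB = GB :=
        phi_fix hbasis hdense Φ Ψ hlip hinv₂ hP1 hP2 hP3 hP4 hP5 hP6 T GB hTiso hout
      have hmax0 : (0:ℝ) ≤ max (|F x - s|) (1 - θ) :=
        le_trans (by linarith) (le_max_right _ _)
      have hdistFG : dist F Gc ≤ max (|F x - s|) (1 - θ) := by
        apply dist_le_of_pt hmax0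
        intro z
        rw [hGval, hGapp]
        by_cases hzx : z = x
        · rw [if_pos hzx, hzx]; exact le_max_left _ _
        · rw [if_neg hzx]
          by_cases hzS : |F z| ≤ θ
          · rw [if_pos hzS, sub_self, abs_zero]; exact hmax0
          · rw [if_neg hzS]
            have hb := abs_le.1 (hFbd z)
            by_cases hzpos : 0 < F z
            · rw [if_pos hzpos]
              have hzθ : θ < F z := by
                rcases abs_cases (F z) with ⟨he, _⟩ | ⟨he, _⟩
                · rw [he] at hzS; linarith [not_le.1 hzS]
                · linarith
              refine le_trans ?_ (le_max_right _ _)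
              rw [abs_of_nonpos (by linarith : F z - 1 ≤ 0)]
              linarith
            · rw [if_neg hzpos]
              push_neg at hzpos
              have hzθ : F z < -θ := by
                rcases abs_cases (F z) with ⟨he, _⟩ | ⟨he, _⟩
                · linarith [not_le.1 hzS]
                · rw [he] at hzS; linarith [not_le.1 hzS]
              refine le_trans ?_ (le_max_right _ _)
              rw [abs_of_nonneg (by linarith : (0:ℝ) ≤ F z - (-1))]
              linarith
      have hGx : Gc x = s := by rw [hGval, hGapp, if_pos rfl]
      have h3 : dist ((Φ f : C(K, ℝ))) ((Φ GB : C(K, ℝ))) ≤ dist F Gc := by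
        have h4 : dist (Φ f) (Φ GB) ≤ (1 : NNReal) * dist f GB := hlip.dist_le_mul _ _
        rw [Subtype.dist_eq, Subtype.dist_eq, NNReal.coe_one, one_mul, hGBcoe, ← hF] at h4
        exact h4
      have h2 := pt_le_dist ((Φ f : C(K, ℝ))) ((Φ GB : C(K, ℝ))) x
      have h5 : (Φ GB : C(K, ℝ)) x = s := by rw [hfixG, hGBcoe]; exact hGx
      rw [h5] at h2
      exact (h2.trans h3).trans hdistFG
    -- extract the two inequalities
    have hcomp1 := comp 1 (by norm_num)
    have hcomp2 := comp (-1) (by norm_num)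
    have hFx1 := abs_le.1 (hFbd x)
    constructor
    · -- min (F x) θ ≤ Φ f x
      have e1 : |F x - 1| = 1 - F x := by
        rw [abs_of_nonpos (by linarith : F x - 1 ≤ 0)]; ring
      rw [e1] at hcomp1
      have e2 : 1 - (Φ f : C(K, ℝ)) x ≤ |(Φ f : C(K, ℝ)) x - 1| := by
        rw [abs_sub_comm]; exact le_abs_self _
      rcases le_total (F x) θ with hc | hc
      · rw [min_eq_left hc]
        have : max (1 - F x) (1 - θ) = 1 - F x := max_eq_left (by linarith)
        rw [this] at hcomp1
        linarith
      · rw [min_eq_right hc]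
        have : max (1 - F x) (1 - θ) = 1 - θ := max_eq_right (by linarith)
        rw [this] at hcomp1
        linarith
    · -- Φ f x ≤ max (F x) (-θ)
      have e1 : |F x - (-1)| = 1 + F x := by
        rw [abs_of_nonneg (by linarith : (0:ℝ) ≤ F x - (-1))]; ring
      rw [e1] at hcomp2
      have e2 : (Φ f : C(K, ℝ)) x + 1 ≤ |(Φ f : C(K, ℝ)) x - (-1)| := by
        have := le_abs_self ((Φ f : C(K, ℝ)) x - (-1))
        linarith
      rcases le_total (F x) (-θ) with hc | hc
      · rw [max_eq_right hc]
        have : max (1 + F x) (1 - θ) = 1 - θ := max_eq_right (by linarith)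
        rw [this] at hcomp2
        linarith
      · rw [max_eq_left hc]
        have : max (1 + F x) (1 - θ) = 1 + F x := max_eq_left (by linarith)
        rw [this] at hcomp2
        linarith
  -- assemble the three statements
  refine ⟨?_, ?_, ?_⟩
  · -- (a)
    intro hfx
    set θ : ℝ := (|F x| + h) / 2 with hθ
    have hθ0 : 0 < θ := by
      have := abs_nonneg (F x)
      rw [hθ]; linarith
    have hθh : θ < h := by rw [hθ]; linarith
    have hxθ : |F x| < θ := by rw [hθ]; linarith
    obtain ⟨hA, hB⟩ := key θ hθ0 hθh
    rw [min_eq_left (by linarith [le_abs_self (F x)] : F x ≤ θ)] at hA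
    rw [max_eq_left (by linarith [neg_abs_le (F x)] : -θ ≤ F x)] at hB
    exact le_antisymm hB hA
  · -- (b)
    intro hfx
    have hfx' : h ≤ F x := hfx
    constructor
    · by_contra hcon
      push_neg at hcon
      obtain ⟨hA, _⟩ := key (h / 2) (by linarith) (by linarith)
      rw [min_eq_right (by linarith : h / 2 ≤ F x)] at hA
      set θ : ℝ := ((Φ f : C(K, ℝ)) x + h) / 2 with hθ
      have hθ0 : 0 < θ := by rw [hθ]; linarith
      have hθh : θ < h := by rw [hθ]; linarith
      obtain ⟨hA2, _⟩ := key θ hθ0 hθh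
      rw [min_eq_right (by rw [hθ]; linarith : θ ≤ F x)] at hA2
      rw [hθ] at hA2
      linarith
    · obtain ⟨_, hB⟩ := key (h / 2) (by linarith) (by linarith)
      rw [max_eq_left (by linarith : -(h / 2) ≤ F x)] at hB
      exact hB
  · -- (c)
    intro hfx
    have hfx' : F x ≤ -h := hfx
    constructor
    · obtain ⟨hA, _⟩ := key (h / 2) (by linarith) (by linarith)
      rw [min_eq_left (by linarith : F x ≤ h / 2)] at hA
      exact hA
    · by_contra hcon
      push_neg at hcon
      obtain ⟨_, hB⟩ := key (h / 2) (by linarith) (by linarith)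
      rw [max_eq_right (by linarith : F x ≤ -(h / 2))] at hB
      set θ : ℝ := (-(Φ f : C(K, ℝ)) x + h) / 2 with hθ
      have hθ0 : 0 < θ := by rw [hθ]; linarith
      have hθh : θ < h := by rw [hθ]; linarith
      obtain ⟨_, hB2⟩ := key θ hθ0 hθh
      rw [max_eq_right (by rw [hθ]; linarith : F x ≤ -θ)] at hB2
      rw [hθ] at hB2
      linarith
end

section
/- Let K be an infinite zero-dimensional compact Hausdorff space whose set of isolated points is dense, B the closed unit ball of C(K), and Φ : B → B a non-expansive bijection satisfying properties (1)–(6). Then for every f ∈ B, min{ |f(z)| : z ∈ K' } = min{ |Φ(f)(z)| : z ∈ K' }. -/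
open Set
open scoped Classical

namespace PhiU0Aux

variable {K : Type*} [TopologicalSpace K]

lemma cont_piecewise {U : Set K} (hU : IsClopen U) {a b : K → ℝ}
    (ha : Continuous a) (hb : Continuous b) [∀ x, Decidable (x ∈ U)] :
    Continuous (U.piecewise a b) := by
  refine Continuous.piecewise ?_ ha hb
  simp [frontier, hU.isClosed.closure_eq, hU.isOpen.interior_eq]

lemma clopen_sandwich (hbasis : TopologicalSpace.IsTopologicalBasis {s : Set K | IsClopen s})
    {C O : Set K} (hC : IsCompact C) (hO : IsOpen O) (hCO : C ⊆ O) :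
    ∃ A : Set K, IsClopen A ∧ C ⊆ A ∧ A ⊆ O := by
  have hch : ∀ x : C, ∃ V : Set K, IsClopen V ∧ (x : K) ∈ V ∧ V ⊆ O := fun x => by
    obtain ⟨V, hV, hxV, hVO⟩ := hbasis.exists_subset_of_mem_open (hCO x.2) hO
    exact ⟨V, hV, hxV, hVO⟩
  choose V hVclopen hxV hVO using hch
  obtain ⟨t, ht⟩ := hC.elim_finite_subcover V (fun x => (hVclopen x).isOpen)
    (fun x hx => mem_iUnion.mpr ⟨⟨x, hx⟩, hxV ⟨x, hx⟩⟩)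
  exact ⟨⋃ x ∈ t, V x, t.finite_toSet.isClopen_biUnion (fun x _ => hVclopen x), ht,
    iUnion₂_subset fun x _ => hVO x⟩

lemma finite_of_isolated {F : Set K} (hF : IsCompact F)
    (hiso : ∀ x ∈ F, IsOpen ({x} : Set K)) : F.Finite := by
  obtain ⟨t, ht⟩ := hF.elim_finite_subcover (fun x : F => ({(x : K)} : Set K))
    (fun x => hiso x x.2) (fun x hx => mem_iUnion.mpr ⟨⟨x, hx⟩, rfl⟩)
  exact Set.Finite.subset (t.finite_toSet.biUnion fun x _ => finite_singleton _) ht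

noncomputable def spike [T1Space K] (x : K) (hx : IsOpen ({x} : Set K)) (c : ℝ) : C(K, ℝ) :=
  ⟨fun y => if y = x then c else 0, by
    classical
    have h : (fun y => if y = x then c else 0)
        = ({x} : Set K).piecewise (fun _ => c) (fun _ => 0) := by
      funext y
      by_cases h : y = x <;> simp [Set.piecewise, h]
    rw [h]
    exact cont_piecewise ⟨isClosed_singleton, hx⟩ continuous_const continuous_const⟩

lemma spike_apply_self [T1Space K] (x : K) (hx : IsOpen ({x} : Set K)) (c : ℝ) :
    spike x hx c x = c := by simp [spike]

lemma spike_apply_ne [T1Space K] (x : K) (hx : IsOpen ({x} : Set K)) (c : ℝ) {y : K} (hy : y ≠ x) :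
    spike x hx c y = 0 := by simp [spike, hy]

end PhiU0Aux

/-- Corollary 9 of the paper: `Φ` preserves `u₀(f) = min { |f z| : z ∈ K' }`, where `K'` is
the set of accumulation points of `K`. -/
theorem Phi_preserves_u0
    (K : Type*) [TopologicalSpace K] [CompactSpace K] [T2Space K] [Infinite K]
    (hbasis : TopologicalSpace.IsTopologicalBasis {s : Set K | IsClopen s})
    (hdense : Dense {x : K | IsOpen ({x} : Set K)})
    (Φ Ψ : ↥(Metric.closedBall (0 : C(K, ℝ)) 1) → ↥(Metric.closedBall (0 : C(K, ℝ)) 1))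
    (hlip : LipschitzWith 1 Φ)
    (hinv₁ : Function.LeftInverse Ψ Φ) (hinv₂ : Function.RightInverse Ψ Φ)
    (hP1 : ∀ (f : ↥(Metric.closedBall (0 : C(K, ℝ)) 1)) (x : K), IsOpen ({x} : Set K) →
      (f : C(K, ℝ)) x = 0 → (Φ f : C(K, ℝ)) x = 0)
    (hP2 : ∀ (f : ↥(Metric.closedBall (0 : C(K, ℝ)) 1)) (x : K), IsOpen ({x} : Set K) →
      (f : C(K, ℝ)) x < 0 → (Φ f : C(K, ℝ)) x ≤ 0)
    (hP3 : ∀ (f : ↥(Metric.closedBall (0 : C(K, ℝ)) 1)) (x : K), IsOpen ({x} : Set K) →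
      (f : C(K, ℝ)) x > 0 → (Φ f : C(K, ℝ)) x ≥ 0)
    (hP4 : ∀ (g : ↥(Metric.closedBall (0 : C(K, ℝ)) 1)) (x : K), IsOpen ({x} : Set K) →
      (g : C(K, ℝ)) x < 0 → (Ψ g : C(K, ℝ)) x < 0)
    (hP5 : ∀ (g : ↥(Metric.closedBall (0 : C(K, ℝ)) 1)) (x : K), IsOpen ({x} : Set K) →
      (g : C(K, ℝ)) x > 0 → (Ψ g : C(K, ℝ)) x > 0)
    (hP6 : ∀ g : ↥(Metric.closedBall (0 : C(K, ℝ)) 1),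
      (∀ x : K, |(g : C(K, ℝ)) x| = 1) → Φ g = g)
    (f : ↥(Metric.closedBall (0 : C(K, ℝ)) 1)) :
    sInf ((fun z => |(f : C(K, ℝ)) z|) '' {x : K | ¬ IsOpen ({x} : Set K)}) =
      sInf ((fun z => |(Φ f : C(K, ℝ)) z|) '' {x : K | ¬ IsOpen ({x} : Set K)}) := by
  classical
  -- pointwise bound for ball members
  have memB : ∀ (w : ↥(Metric.closedBall (0 : C(K, ℝ)) 1)) (x : K), |(w : C(K, ℝ)) x| ≤ 1 := by
    intro w x
    have h1 : ‖(w : C(K, ℝ))‖ ≤ 1 := by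
      have h := w.2
      rwa [Metric.mem_closedBall, dist_eq_norm, sub_zero] at h
    have h2 := ContinuousMap.norm_coe_le_norm (w : C(K, ℝ)) x
    rw [Real.norm_eq_abs] at h2
    exact h2.trans h1
  have mkB : ∀ h : C(K, ℝ), (∀ x, |h x| ≤ 1) → h ∈ Metric.closedBall (0 : C(K, ℝ)) 1 := by
    intro h hh
    rw [Metric.mem_closedBall, dist_eq_norm, sub_zero]
    exact (ContinuousMap.norm_le h zero_le_one).mpr fun x => by
      rw [Real.norm_eq_abs]; exact hh x
  have distB : ∀ v w : ↥(Metric.closedBall (0 : C(K, ℝ)) 1),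
      dist v w = ‖(v : C(K, ℝ)) - (w : C(K, ℝ))‖ := by
    intro v w
    rw [Subtype.dist_eq, dist_eq_norm]
  have keyabs : ∀ s a : ℝ, |s| = 1 → |a| ≤ 1 → |a - s| = 1 - s * a := by
    intro s a hs ha
    rw [abs_le] at ha
    rcases (abs_eq (by norm_num : (0:ℝ) ≤ 1)).mp hs with h | h <;> subst h
    · rw [abs_of_nonpos (by linarith)]; ring
    · rw [abs_of_nonneg (by linarith)]; ring
  -- Claim A, pointwise form
  have claimA : ∀ v g : ↥(Metric.closedBall (0 : C(K, ℝ)) 1),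
      (∀ x, |(g : C(K, ℝ)) x| = 1) → ∀ γ : ℝ,
      (∀ x, -γ ≤ (g : C(K, ℝ)) x * (v : C(K, ℝ)) x) →
      ∀ x, -γ ≤ (g : C(K, ℝ)) x * (Φ v : C(K, ℝ)) x := by
    intro v g hg γ hγ x
    obtain ⟨x₀⟩ : Nonempty K := inferInstance
    have hγ1 : (0:ℝ) ≤ 1 + γ := by
      have h1 := hγ x₀
      have h2 : (g : C(K, ℝ)) x₀ * (v : C(K, ℝ)) x₀ ≤ 1 := by
        calc (g : C(K, ℝ)) x₀ * (v : C(K, ℝ)) x₀ ≤ |(g : C(K, ℝ)) x₀ * (v : C(K, ℝ)) x₀| :=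
              le_abs_self _
          _ = |(g : C(K, ℝ)) x₀| * |(v : C(K, ℝ)) x₀| := abs_mul _ _
          _ ≤ 1 := by rw [hg x₀, one_mul]; exact memB v x₀
      linarith
    have hd1 : dist v g ≤ 1 + γ := by
      rw [distB]
      refine (ContinuousMap.norm_le _ hγ1).mpr fun y => ?_
      rw [ContinuousMap.sub_apply, Real.norm_eq_abs, keyabs _ _ (hg y) (memB v y)]
      have := hγ y
      linarith
    have hΦg : Φ g = g := hP6 g hg
    have hd2 : dist (Φ v) g ≤ 1 + γ := by
      calc dist (Φ v) g = dist (Φ v) (Φ g) := by rw [hΦg]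
        _ ≤ 1 * dist v g := hlip.dist_le_mul v g
        _ ≤ 1 + γ := by rw [one_mul]; exact hd1
    have hp : |(Φ v : C(K, ℝ)) x - (g : C(K, ℝ)) x| ≤ 1 + γ := by
      have h := ContinuousMap.norm_coe_le_norm ((Φ v : C(K, ℝ)) - (g : C(K, ℝ))) x
      rw [ContinuousMap.sub_apply, Real.norm_eq_abs] at h
      rw [distB] at hd2
      exact h.trans hd2
    rw [keyabs _ _ (hg x) (memB (Φ v) x)] at hp
    linarith
  -- at isolated points, Φ decreases modulus
  have pointwise_iso : ∀ (v : ↥(Metric.closedBall (0 : C(K, ℝ)) 1)) (y : K),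
      IsOpen ({y} : Set K) → |(Φ v : C(K, ℝ)) y| ≤ |(v : C(K, ℝ)) y| := by
    intro v y hy
    by_contra hcon
    push_neg at hcon
    set α := |(v : C(K, ℝ)) y| with hα
    set β := |(Φ v : C(K, ℝ)) y| with hβ
    have hβpos : 0 < β := lt_of_le_of_lt (abs_nonneg _) hcon
    set γ := (α + β) / 2 with hγdef
    have hαγ : α < γ := by rw [hγdef]; linarith
    have hγβ : γ < β := by rw [hγdef]; linarith
    have hyclopen : IsClopen ({y} : Set K) := ⟨isClosed_singleton, hy⟩
    have hCc : IsCompact ({x : K | 0 ≤ (v : C(K, ℝ)) x} ∩ ({y} : Set K)ᶜ) := by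
      apply IsClosed.isCompact
      exact (isClosed_le continuous_const (v : C(K, ℝ)).continuous).inter
        (isClosed_compl_iff.mpr hy)
    have hOo : IsOpen ({x : K | -γ < (v : C(K, ℝ)) x} ∩ ({y} : Set K)ᶜ) :=
      (isOpen_lt continuous_const (v : C(K, ℝ)).continuous).inter
        isClosed_singleton.isOpen_compl
    have hCOsub : ({x : K | 0 ≤ (v : C(K, ℝ)) x} ∩ ({y} : Set K)ᶜ) ⊆
        ({x : K | -γ < (v : C(K, ℝ)) x} ∩ ({y} : Set K)ᶜ) := by
      rintro x ⟨hx1, hx2⟩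
      have hx1' : 0 ≤ (v : C(K, ℝ)) x := hx1
      have hγpos : 0 < γ := lt_of_le_of_lt (abs_nonneg _) hαγ
      have : -γ < (v : C(K, ℝ)) x := by linarith
      exact ⟨this, hx2⟩
    obtain ⟨A, hAclopen, hCA, hAO⟩ := PhiU0Aux.clopen_sandwich hbasis hCc hOo hCOsub
    set s : ℝ := if 0 < (Φ v : C(K, ℝ)) y then -1 else 1 with hs
    have habs_s : |s| = 1 := by
      rw [hs]; split <;> norm_num
    set g0 : K → ℝ :=
      ({y} : Set K).piecewise (fun _ => s) (A.piecewise (fun _ => 1) (fun _ => -1)) with hg0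
    have hg0cont : Continuous g0 :=
      PhiU0Aux.cont_piecewise hyclopen continuous_const
        (PhiU0Aux.cont_piecewise hAclopen continuous_const continuous_const)
    have hg0y : g0 y = s := by
      rw [hg0, Set.piecewise_eq_of_mem _ _ _ (Set.mem_singleton y)]
    have hg0A : ∀ x : K, x ≠ y → x ∈ A → g0 x = 1 := by
      intro x hxy hxA
      rw [hg0, Set.piecewise_eq_of_notMem _ _ _ (by simpa using hxy),
        Set.piecewise_eq_of_mem _ _ _ hxA]
    have hg0nA : ∀ x : K, x ≠ y → x ∉ A → g0 x = -1 := by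
      intro x hxy hxA
      rw [hg0, Set.piecewise_eq_of_notMem _ _ _ (by simpa using hxy),
        Set.piecewise_eq_of_notMem _ _ _ hxA]
    have hg1 : ∀ x : K, |g0 x| = 1 := by
      intro x
      by_cases hxy : x = y
      · subst hxy; rw [hg0y]; exact habs_s
      · by_cases hxA : x ∈ A
        · rw [hg0A x hxy hxA]; norm_num
        · rw [hg0nA x hxy hxA]; norm_num
    have hgmem : ContinuousMap.mk g0 hg0cont ∈ Metric.closedBall (0 : C(K, ℝ)) 1 :=
      mkB _ fun x => le_of_eq (hg1 x)
    set gelt : ↥(Metric.closedBall (0 : C(K, ℝ)) 1) := ⟨ContinuousMap.mk g0 hg0cont, hgmem⟩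
      with hgelt
    have hgcoe : ∀ x : K, (gelt : C(K, ℝ)) x = g0 x := fun x => rfl
    have hbound : ∀ x : K, -γ ≤ (gelt : C(K, ℝ)) x * (v : C(K, ℝ)) x := by
      intro x
      rw [hgcoe]
      by_cases hxy : x = y
      · subst hxy
        rw [hg0y]
        have h1 : -(|s| * |(v : C(K, ℝ)) x|) ≤ s * (v : C(K, ℝ)) x := by
          have := neg_abs_le (s * (v : C(K, ℝ)) x)
          rwa [abs_mul] at this
        rw [habs_s, one_mul] at h1
        have : |(v : C(K, ℝ)) x| = α := rfl
        linarith [h1, hαγ]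
      · by_cases hxA : x ∈ A
        · rw [hg0A x hxy hxA, one_mul]
          exact le_of_lt (hAO hxA).1
        · rw [hg0nA x hxy hxA]
          have hneg : (v : C(K, ℝ)) x < 0 := by
            by_contra hge
            push_neg at hge
            exact hxA (hCA ⟨hge, by simpa using hxy⟩)
          have hγpos : 0 < γ := lt_of_le_of_lt (abs_nonneg _) hαγ
          nlinarith
    have hfin := claimA v gelt hg1 γ hbound y
    rw [hgcoe, hg0y] at hfin
    have hval : s * (Φ v : C(K, ℝ)) y = -β := by
      rw [hs]
      by_cases h : 0 < (Φ v : C(K, ℝ)) y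
      · rw [if_pos h, hβ, abs_of_pos h]; ring
      · have hne : (Φ v : C(K, ℝ)) y ≠ 0 := by
          intro h0
          rw [hβ, h0, abs_zero] at hβpos
          exact lt_irrefl _ hβpos
        have hneg : (Φ v : C(K, ℝ)) y < 0 := lt_of_le_of_ne (not_lt.mp h) hne
        rw [if_neg h, hβ, abs_of_neg hneg]; ring
    rw [hval] at hfin
    linarith
  -- everywhere (by density of isolated points)
  have pointwise_all : ∀ (v : ↥(Metric.closedBall (0 : C(K, ℝ)) 1)) (x : K),
      |(Φ v : C(K, ℝ)) x| ≤ |(v : C(K, ℝ)) x| := by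
    intro v x
    have hclosed : IsClosed {x : K | |(Φ v : C(K, ℝ)) x| ≤ |(v : C(K, ℝ)) x|} :=
      isClosed_le ((Φ v : C(K, ℝ)).continuous.abs) ((v : C(K, ℝ)).continuous.abs)
    have hsub : {x : K | IsOpen ({x} : Set K)} ⊆
        {x : K | |(Φ v : C(K, ℝ)) x| ≤ |(v : C(K, ℝ)) x|} := fun y hy => pointwise_iso v y hy
    have hx : x ∈ closure {x : K | IsOpen ({x} : Set K)} := by
      rw [hdense.closure_eq]; trivial
    have h2 := closure_mono hsub hx
    rwa [hclosed.closure_eq] at h2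
  -- Theorem A : functions unimodular off a finite set of isolated points are fixed
  have thmA : ∀ (n : ℕ) (S : Finset K), S.card ≤ n → (∀ x ∈ S, IsOpen ({x} : Set K)) →
      ∀ τ : ↥(Metric.closedBall (0 : C(K, ℝ)) 1),
      (∀ y, y ∉ S → |(τ : C(K, ℝ)) y| = 1) → Φ τ = τ := by
    intro n
    induction n with
    | zero =>
      intro S hcard hiso τ hτ
      refine hP6 τ fun y => hτ y ?_
      have hS : S = ∅ := Finset.card_eq_zero.mp (Nat.le_zero.mp hcard)
      simp [hS]
    | succ n IH =>
      intro S hcard hiso τ hτ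
      set u := Ψ τ with hu
      have hΦu : Φ u = τ := hinv₂ τ
      -- off S, u agrees with τ
      have ha : ∀ y, y ∉ S → (u : C(K, ℝ)) y = (τ : C(K, ℝ)) y := by
        have hsub : {x : K | IsOpen ({x} : Set K)} ∩ (↑S : Set K)ᶜ ⊆
            {x : K | (u : C(K, ℝ)) x = (τ : C(K, ℝ)) x} := by
          rintro y ⟨hyiso, hyS⟩
          have hyS' : y ∉ S := by simpa using hyS
          have h1 : |(τ : C(K, ℝ)) y| = 1 := hτ y hyS'
          have h2 : |(τ : C(K, ℝ)) y| ≤ |(u : C(K, ℝ)) y| := by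
            have h := pointwise_iso u y hyiso
            rwa [hΦu] at h
          have h3 : |(u : C(K, ℝ)) y| = 1 := le_antisymm (memB u y) (by rw [h1] at h2; exact h2)
          rcases (abs_eq (by norm_num : (0:ℝ) ≤ 1)).mp h1 with hone | hmone
          · have hupos : 0 < (u : C(K, ℝ)) y := hP5 τ y hyiso (by rw [hone]; norm_num)
            have h4 : (u : C(K, ℝ)) y = 1 := by
              have h5 := abs_of_pos hupos
              rw [h3] at h5
              linarith
            show (u : C(K, ℝ)) y = (τ : C(K, ℝ)) y
            rw [h4, hone]
          · have huneg : (u : C(K, ℝ)) y < 0 := hP4 τ y hyiso (by rw [hmone]; norm_num)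
            have h4 : (u : C(K, ℝ)) y = -1 := by
              have h5 := abs_of_neg huneg
              rw [h3] at h5
              linarith
            show (u : C(K, ℝ)) y = (τ : C(K, ℝ)) y
            rw [h4, hmone]
        have hclosed : IsClosed {x : K | (u : C(K, ℝ)) x = (τ : C(K, ℝ)) x} :=
          isClosed_eq (u : C(K, ℝ)).continuous (τ : C(K, ℝ)).continuous
        intro y hyS
        have hSopen : IsOpen ((↑S : Set K)ᶜ) := S.finite_toSet.isClosed.isOpen_compl
        have hyc : y ∈ closure ({x : K | IsOpen ({x} : Set K)} ∩ (↑S : Set K)ᶜ) := by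
          rw [mem_closure_iff]
          intro O hO hyO
          obtain ⟨x, hx1, hx2⟩ := hdense.exists_mem_open (hO.inter hSopen)
            ⟨y, hyO, by simpa using hyS⟩
          exact ⟨x, hx2.1, hx1, hx2.2⟩
        have h6 := closure_mono hsub hyc
        rwa [hclosed.closure_eq] at h6
      -- on S, u dominates τ in modulus
      have hbmod : ∀ x ∈ S, |(τ : C(K, ℝ)) x| ≤ |(u : C(K, ℝ)) x| := by
        intro x hx
        have h := pointwise_iso u x (hiso x hx)
        rwa [hΦu] at h
      set Z := S.filter (fun x => |(τ : C(K, ℝ)) x| < |(u : C(K, ℝ)) x|) with hZdef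
      have hZsub : Z ⊆ S := Finset.filter_subset _ _
      have huτ : ∀ x ∈ S, x ∉ Z → (u : C(K, ℝ)) x = (τ : C(K, ℝ)) x := by
        intro x hxS hxZ
        have hnlt : ¬ |(τ : C(K, ℝ)) x| < |(u : C(K, ℝ)) x| := by
          intro h; exact hxZ (Finset.mem_filter.mpr ⟨hxS, h⟩)
        have heq : |(u : C(K, ℝ)) x| = |(τ : C(K, ℝ)) x| :=
          le_antisymm (not_lt.mp hnlt) (hbmod x hxS)
        rcases lt_trichotomy ((τ : C(K, ℝ)) x) 0 with hneg | hzero | hpos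
        · have h1 : (u : C(K, ℝ)) x < 0 := hP4 τ x (hiso x hxS) hneg
          rw [abs_of_neg h1, abs_of_neg hneg] at heq
          linarith
        · rw [hzero, abs_zero, abs_eq_zero] at heq
          rw [heq, hzero]
        · have h1 : 0 < (u : C(K, ℝ)) x := hP5 τ x (hiso x hxS) hpos
          rw [abs_of_pos h1, abs_of_pos hpos] at heq
          exact heq
      by_cases hZe : Z = ∅
      · have huτall : u = τ := by
          apply Subtype.ext
          apply ContinuousMap.ext
          intro x
          by_cases hxS : x ∈ S
          · exact huτ x hxS (by simp [hZe])
          · exact ha x hxS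
        calc Φ τ = Φ u := by rw [huτall]
          _ = τ := hΦu
      · have hZne : Z.Nonempty := Finset.nonempty_of_ne_empty hZe
        obtain ⟨xt, hxtZ, hxtmin⟩ := Z.exists_min_image (fun x => |(u : C(K, ℝ)) x|) hZne
        have hZiso : ∀ x ∈ Z, IsOpen ({x} : Set K) := fun x hx => hiso x (hZsub hx)
        set sval : K → ℝ := fun x => if 0 < (u : C(K, ℝ)) x then 1 else -1 with hsval
        have hsval1 : ∀ x : K, |sval x| = 1 := by
          intro x
          by_cases h : 0 < (u : C(K, ℝ)) x <;> simp [hsval, h]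
        set E0 : C(K, ℝ) := (τ : C(K, ℝ)) +
          ∑ p ∈ Z.attach, PhiU0Aux.spike (p : K) (hZiso p p.2) (sval p - (τ : C(K, ℝ)) p)
          with hE0
        have hE0apply : ∀ y : K, E0 y = (τ : C(K, ℝ)) y +
            ∑ p ∈ Z.attach,
              (PhiU0Aux.spike (p : K) (hZiso p p.2) (sval p - (τ : C(K, ℝ)) p)) y := by
          intro y
          rw [hE0]
          simp
        have hE0ne : ∀ y, y ∉ Z → E0 y = (τ : C(K, ℝ)) y := by
          intro y hy
          rw [hE0apply, Finset.sum_eq_zero, add_zero]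
          intro p _
          exact PhiU0Aux.spike_apply_ne _ _ _ (fun h => hy (h ▸ p.2))
        have hE0in : ∀ y, (hyZ : y ∈ Z) → E0 y = sval y := by
          intro y hy
          rw [hE0apply, Finset.sum_eq_single (⟨y, hy⟩ : {x // x ∈ Z})]
          · rw [PhiU0Aux.spike_apply_self]; ring
          · intro b _ hb
            refine PhiU0Aux.spike_apply_ne _ _ _ ?_
            intro h
            exact hb (Subtype.ext h.symm)
          · intro h
            exact absurd (Finset.mem_attach _ _) h
        have hE0ball : ∀ y, |E0 y| ≤ 1 := by
          intro y
          by_cases hy : y ∈ Z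
          · rw [hE0in y hy]; exact le_of_eq (hsval1 y)
          · rw [hE0ne y hy]; exact memB τ y
        have hE0mem : E0 ∈ Metric.closedBall (0 : C(K, ℝ)) 1 := mkB E0 hE0ball
        set Eelt : ↥(Metric.closedBall (0 : C(K, ℝ)) 1) := ⟨E0, hE0mem⟩ with hEelt
        have hEcoe : ∀ y : K, (Eelt : C(K, ℝ)) y = E0 y := fun y => rfl
        have hcard' : (S \ Z).card ≤ n := by
          have h1 : (S \ Z).card < S.card := Finset.card_lt_card (Finset.sdiff_ssubset hZsub hZne)
          omega
        have hΦE : Φ Eelt = Eelt := by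
          refine IH (S \ Z) hcard' (fun x hx => hiso x (Finset.mem_sdiff.mp hx).1) Eelt ?_
          intro y hy
          rw [hEcoe]
          by_cases hyZ : y ∈ Z
          · rw [hE0in y hyZ]; exact hsval1 y
          · have hyS : y ∉ S := fun hyS => hy (Finset.mem_sdiff.mpr ⟨hyS, hyZ⟩)
            rw [hE0ne y hyZ]; exact hτ y hyS
        have hxtS : xt ∈ S := hZsub hxtZ
        have hxtlt : |(τ : C(K, ℝ)) xt| < |(u : C(K, ℝ)) xt| := (Finset.mem_filter.mp hxtZ).2
        have hub : dist u Eelt ≤ 1 - |(u : C(K, ℝ)) xt| := by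
          rw [distB]
          have h0 : (0:ℝ) ≤ 1 - |(u : C(K, ℝ)) xt| := by linarith [memB u xt]
          refine (ContinuousMap.norm_le _ h0).mpr fun y => ?_
          rw [ContinuousMap.sub_apply, Real.norm_eq_abs, hEcoe]
          by_cases hyZ : y ∈ Z
          · rw [hE0in y hyZ]
            have hyne : (u : C(K, ℝ)) y ≠ 0 := by
              have h1 := (Finset.mem_filter.mp hyZ).2
              intro h0'
              rw [h0', abs_zero] at h1
              exact absurd h1 (not_lt.mpr (abs_nonneg _))
            have hmin := hxtmin y hyZ
            have hy1 := memB u y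
            rw [abs_le] at hy1
            by_cases hpos : 0 < (u : C(K, ℝ)) y
            · have hsy : sval y = 1 := by simp [hsval, hpos]
              rw [hsy, abs_of_nonpos (by linarith)]
              have : |(u : C(K, ℝ)) y| = (u : C(K, ℝ)) y := abs_of_pos hpos
              linarith
            · have hneg : (u : C(K, ℝ)) y < 0 := lt_of_le_of_ne (not_lt.mp hpos) hyne
              have hsy : sval y = -1 := by simp [hsval, hpos]
              rw [hsy]
              have h2 : |(u : C(K, ℝ)) y - (-1)| = (u : C(K, ℝ)) y + 1 := by
                rw [abs_of_nonneg (by linarith)]; ring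
              rw [h2]
              have : |(u : C(K, ℝ)) y| = -(u : C(K, ℝ)) y := abs_of_neg hneg
              linarith
          · have heq : (u : C(K, ℝ)) y = E0 y := by
              rw [hE0ne y hyZ]
              by_cases hyS : y ∈ S
              · exact huτ y hyS hyZ
              · exact ha y hyS
            rw [heq, sub_self, abs_zero]
            exact h0
        have hlb : 1 - |(τ : C(K, ℝ)) xt| ≤ dist τ Eelt := by
          rw [distB]
          have h1 : |(τ : C(K, ℝ)) xt - E0 xt| ≤ ‖(τ : C(K, ℝ)) - E0‖ := by
            have h := ContinuousMap.norm_coe_le_norm ((τ : C(K, ℝ)) - E0) xt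
            rwa [ContinuousMap.sub_apply, Real.norm_eq_abs] at h
          have h2 : 1 - |(τ : C(K, ℝ)) xt| ≤ |(τ : C(K, ℝ)) xt - E0 xt| := by
            rw [hE0in xt hxtZ]
            have h3 := abs_sub_abs_le_abs_sub (sval xt) ((τ : C(K, ℝ)) xt)
            rw [hsval1 xt] at h3
            rw [abs_sub_comm]
            exact h3
          exact h2.trans h1
        have hchain : dist τ Eelt ≤ dist u Eelt := by
          have h := hlip.dist_le_mul u Eelt
          rw [hΦu, hΦE] at h
          simpa using h
        exfalso
        linarith
  -- ===== Final assembly =====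
  set Kp : Set K := {x : K | ¬ IsOpen ({x} : Set K)} with hKpdef
  have hKpclosed : IsClosed Kp := by
    have hopen : IsOpen {x : K | IsOpen ({x} : Set K)} := by
      rw [isOpen_iff_mem_nhds]
      intro x hx
      refine Filter.mem_of_superset ((hx : IsOpen ({x} : Set K)).mem_nhds rfl) ?_
      intro y hy
      rw [Set.mem_singleton_iff] at hy
      rw [hy]
      exact hx
    have hcompl : Kp = {x : K | IsOpen ({x} : Set K)}ᶜ := rfl
    rw [hcompl]
    exact hopen.isClosed_compl
  have hKpne : Kp.Nonempty := by
    by_contra hne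
    rw [Set.not_nonempty_iff_eq_empty] at hne
    have hall : ∀ x : K, IsOpen ({x} : Set K) := by
      intro x
      by_contra hno
      have hx : x ∈ Kp := hno
      rw [hne] at hx
      exact hx
    have hfin : (Set.univ : Set K).Finite :=
      PhiU0Aux.finite_of_isolated isCompact_univ (fun x _ => hall x)
    exact Set.infinite_univ hfin
  have hKpcompact : IsCompact Kp := hKpclosed.isCompact
  obtain ⟨zs, hzsK, hzsmin'⟩ := hKpcompact.exists_isMinOn hKpne
    (((f : C(K, ℝ)).continuous.abs).continuousOn :
      ContinuousOn (fun z => |(f : C(K, ℝ)) z|) Kp)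
  have hzsmin : ∀ z ∈ Kp, |(f : C(K, ℝ)) zs| ≤ |(f : C(K, ℝ)) z| := fun z hz => hzsmin' hz
  have hbdd1 : BddBelow ((fun z => |(f : C(K, ℝ)) z|) '' Kp) := by
    refine ⟨0, ?_⟩
    rintro b ⟨z, hz, rfl⟩
    exact abs_nonneg _
  have hbdd2 : BddBelow ((fun z => |(Φ f : C(K, ℝ)) z|) '' Kp) := by
    refine ⟨0, ?_⟩
    rintro b ⟨z, hz, rfl⟩
    exact abs_nonneg _
  have hne1 : ((fun z => |(f : C(K, ℝ)) z|) '' Kp).Nonempty := ⟨_, ⟨zs, hzsK, rfl⟩⟩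
  have hne2 : ((fun z => |(Φ f : C(K, ℝ)) z|) '' Kp).Nonempty := ⟨_, ⟨zs, hzsK, rfl⟩⟩
  set r := sInf ((fun z => |(f : C(K, ℝ)) z|) '' Kp) with hrdef
  have hrle : ∀ z ∈ Kp, r ≤ |(f : C(K, ℝ)) z| := fun z hz => csInf_le hbdd1 ⟨z, hz, rfl⟩
  have hreq : r = |(f : C(K, ℝ)) zs| :=
    le_antisymm (csInf_le hbdd1 ⟨zs, hzsK, rfl⟩)
      (le_csInf hne1 (by rintro b ⟨z, hz, rfl⟩; exact hzsmin z hz))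
  apply le_antisymm
  · -- r ≤ sInf RHS
    refine le_csInf hne2 ?_
    rintro b ⟨z, hz, rfl⟩
    by_contra hlt
    push_neg at hlt
    have h0r : 0 < r := lt_of_le_of_lt (abs_nonneg _) hlt
    set c := (|(Φ f : C(K, ℝ)) z| + r) / 2 with hcdef
    have hc1 : |(Φ f : C(K, ℝ)) z| < c := by rw [hcdef]; linarith
    have hc2 : c < r := by rw [hcdef]; linarith
    have hcpos : 0 < c := lt_of_le_of_lt (abs_nonneg _) hc1
    have hcle1 : c ≤ 1 := by
      have h1 : r ≤ 1 := by rw [hreq]; exact memB f zs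
      linarith
    set F : Set K := {x : K | |(f : C(K, ℝ)) x| ≤ c} with hFdef
    have hFiso : ∀ x ∈ F, IsOpen ({x} : Set K) := by
      intro x hx
      by_contra hno
      have hxKp : x ∈ Kp := hno
      have h1 := hrle x hxKp
      have hxF : |(f : C(K, ℝ)) x| ≤ c := hx
      linarith
    have hFclosed : IsClosed F := isClosed_le ((f : C(K, ℝ)).continuous.abs) continuous_const
    have hFfin : F.Finite := PhiU0Aux.finite_of_isolated hFclosed.isCompact hFiso
    set SF : Finset K := hFfin.toFinset with hSFdef
    set Ap : Set K := {x : K | c < (f : C(K, ℝ)) x} with hApdef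
    set Am : Set K := {x : K | (f : C(K, ℝ)) x < -c} with hAmdef
    have hApopen : IsOpen Ap := isOpen_lt continuous_const (f : C(K, ℝ)).continuous
    have hAmopen : IsOpen Am := isOpen_lt (f : C(K, ℝ)).continuous continuous_const
    have hFopen : IsOpen F := by
      rw [isOpen_iff_mem_nhds]
      intro x hx
      refine Filter.mem_of_superset ((hFiso x hx).mem_nhds rfl) ?_
      intro y hy
      rw [Set.mem_singleton_iff] at hy
      rw [hy]
      exact hx
    have htri : ∀ x : K, x ∈ F ∨ x ∈ Ap ∨ x ∈ Am := by
      intro x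
      rcases le_or_gt (|(f : C(K, ℝ)) x|) c with h | h
      · exact Or.inl h
      · rcases le_or_gt ((f : C(K, ℝ)) x) 0 with h2 | h2
        · refine Or.inr (Or.inr ?_)
          show (f : C(K, ℝ)) x < -c
          rw [abs_of_nonpos h2] at h
          linarith
        · refine Or.inr (Or.inl ?_)
          show c < (f : C(K, ℝ)) x
          rwa [abs_of_pos h2] at h
    have hdisj : ∀ x : K, x ∈ Ap → x ∈ Am → False := by
      intro x h1 h2
      have h1' : c < (f : C(K, ℝ)) x := h1
      have h2' : (f : C(K, ℝ)) x < -c := h2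
      linarith
    have hFAp : ∀ x : K, x ∈ F → x ∈ Ap → False := by
      intro x h1 h2
      have h1' : |(f : C(K, ℝ)) x| ≤ c := h1
      have h2' : c < (f : C(K, ℝ)) x := h2
      have := le_abs_self ((f : C(K, ℝ)) x)
      linarith
    have hFAm : ∀ x : K, x ∈ F → x ∈ Am → False := by
      intro x h1 h2
      have h1' : |(f : C(K, ℝ)) x| ≤ c := h1
      have h2' : (f : C(K, ℝ)) x < -c := h2
      have := neg_abs_le ((f : C(K, ℝ)) x)
      linarith
    have hApc : IsClopen Ap := by
      refine ⟨?_, hApopen⟩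
      have hcompl : Ap = (F ∪ Am)ᶜ := by
        ext x
        simp only [Set.mem_compl_iff, Set.mem_union]
        constructor
        · intro hx hc'
          rcases hc' with h | h
          · exact hFAp x h hx
          · exact hdisj x hx h
        · intro hx
          push_neg at hx
          rcases htri x with h | h | h
          · exact absurd h hx.1
          · exact h
          · exact absurd h hx.2
      rw [hcompl]
      exact (hFopen.union hAmopen).isClosed_compl
    have hAmc : IsClopen Am := by
      refine ⟨?_, hAmopen⟩
      have hcompl : Am = (F ∪ Ap)ᶜ := by
        ext x
        simp only [Set.mem_compl_iff, Set.mem_union]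
        constructor
        · intro hx hc'
          rcases hc' with h | h
          · exact hFAm x h hx
          · exact hdisj x h hx
        · intro hx
          push_neg at hx
          rcases htri x with h | h | h
          · exact absurd h hx.1
          · exact absurd h hx.2
          · exact h
      rw [hcompl]
      exact (hFopen.union hApopen).isClosed_compl
    set τ0 : K → ℝ := Ap.piecewise (fun _ => 1)
      (Am.piecewise (fun _ => -1) (f : C(K, ℝ))) with hτ0def
    have hτ0cont : Continuous τ0 :=
      PhiU0Aux.cont_piecewise hApc continuous_const
        (PhiU0Aux.cont_piecewise hAmc continuous_const (f : C(K, ℝ)).continuous)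
    have hτ0Ap : ∀ x, x ∈ Ap → τ0 x = 1 := by
      intro x hx
      rw [hτ0def, Set.piecewise_eq_of_mem _ _ _ hx]
    have hτ0Am : ∀ x, x ∉ Ap → x ∈ Am → τ0 x = -1 := by
      intro x hx1 hx2
      rw [hτ0def, Set.piecewise_eq_of_notMem _ _ _ hx1, Set.piecewise_eq_of_mem _ _ _ hx2]
    have hτ0F : ∀ x, x ∉ Ap → x ∉ Am → τ0 x = (f : C(K, ℝ)) x := by
      intro x hx1 hx2
      rw [hτ0def, Set.piecewise_eq_of_notMem _ _ _ hx1, Set.piecewise_eq_of_notMem _ _ _ hx2]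
    have hτ0ball : ∀ x, |τ0 x| ≤ 1 := by
      intro x
      by_cases h1 : x ∈ Ap
      · rw [hτ0Ap x h1]; norm_num
      · by_cases h2 : x ∈ Am
        · rw [hτ0Am x h1 h2]; norm_num
        · rw [hτ0F x h1 h2]; exact memB f x
    have hτ0mem : ContinuousMap.mk τ0 hτ0cont ∈ Metric.closedBall (0 : C(K, ℝ)) 1 :=
      mkB _ hτ0ball
    set τelt : ↥(Metric.closedBall (0 : C(K, ℝ)) 1) := ⟨ContinuousMap.mk τ0 hτ0cont, hτ0mem⟩
      with hτelt
    have hτcoe : ∀ y : K, (τelt : C(K, ℝ)) y = τ0 y := fun y => rfl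
    have hτuni0 : ∀ y : K, y ∉ F → |τ0 y| = 1 := by
      intro y hyF
      rcases htri y with h | h | h
      · exact absurd h hyF
      · rw [hτ0Ap y h]; norm_num
      · have hyAp : y ∉ Ap := fun hyAp => hdisj y hyAp h
        rw [hτ0Am y hyAp h]; norm_num
    have hΦτ : Φ τelt = τelt := by
      refine thmA SF.card SF le_rfl ?_ τelt ?_
      · intro x hx
        exact hFiso x (hFfin.mem_toFinset.mp hx)
      · intro y hy
        rw [hτcoe]
        exact hτuni0 y (fun hyF => hy (hFfin.mem_toFinset.mpr hyF))
    have hdistfτ : dist f τelt ≤ 1 - c := by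
      rw [distB]
      have h0 : (0:ℝ) ≤ 1 - c := by linarith
      refine (ContinuousMap.norm_le _ h0).mpr fun y => ?_
      rw [ContinuousMap.sub_apply, Real.norm_eq_abs, hτcoe]
      by_cases h1 : y ∈ Ap
      · rw [hτ0Ap y h1]
        have h2 : c < (f : C(K, ℝ)) y := h1
        have h3 := memB f y
        rw [abs_le] at h3
        rw [abs_of_nonpos (by linarith)]
        linarith
      · by_cases h2 : y ∈ Am
        · rw [hτ0Am y h1 h2]
          have h3 : (f : C(K, ℝ)) y < -c := h2
          have h4 := memB f y
          rw [abs_le] at h4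
          rw [abs_of_nonneg (by linarith)]
          linarith
        · rw [hτ0F y h1 h2, sub_self, abs_zero]
          exact h0
    have hdistΦ : dist (Φ f) τelt ≤ 1 - c := by
      have h := hlip.dist_le_mul f τelt
      rw [hΦτ] at h
      simp only [NNReal.coe_one, one_mul] at h
      exact h.trans hdistfτ
    have hpt : |(Φ f : C(K, ℝ)) z - τ0 z| ≤ 1 - c := by
      have h := ContinuousMap.norm_coe_le_norm ((Φ f : C(K, ℝ)) - (τelt : C(K, ℝ))) z
      rw [ContinuousMap.sub_apply, Real.norm_eq_abs, hτcoe] at h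
      rw [distB] at hdistΦ
      exact h.trans hdistΦ
    have hzF : z ∉ F := by
      intro hzF
      have h1 := hrle z hz
      have h2 : |(f : C(K, ℝ)) z| ≤ c := hzF
      linarith
    have hτz : |τ0 z| = 1 := hτuni0 z hzF
    have htriangle : |τ0 z| - |(Φ f : C(K, ℝ)) z| ≤ |(Φ f : C(K, ℝ)) z - τ0 z| := by
      have h := abs_sub_abs_le_abs_sub (τ0 z) ((Φ f : C(K, ℝ)) z)
      rw [abs_sub_comm] at h
      exact h
    rw [hτz] at htriangle
    linarith
  · -- sInf RHS ≤ r
    have h1 : sInf ((fun z => |(Φ f : C(K, ℝ)) z|) '' Kp) ≤ |(Φ f : C(K, ℝ)) zs| :=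
      csInf_le hbdd2 ⟨zs, hzsK, rfl⟩
    have h2 : |(Φ f : C(K, ℝ)) zs| ≤ |(f : C(K, ℝ)) zs| := pointwise_all f zs
    rw [← hreq] at h2
    exact h1.trans h2
end

section
/- Let K be an infinite zero-dimensional compact Hausdorff space whose set of isolated points is dense, B the closed unit ball of C(K), and Φ : B → B a non-expansive bijection satisfying properties (1)–(6). Let g ∈ B be such that u = min{ |g(z)| : z ∈ K' } ≠ 0, and let x be an isolated point of K. If |g(x)| < u, then Φ⁻¹(g)(x) = g(x). -/
set_option linter.unusedSectionVars false
open scoped Classical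

section PhiInvAux

variable {K : Type*} [TopologicalSpace K] [CompactSpace K]

private lemma memBall_iff (f : C(K,ℝ)) :
    f ∈ Metric.closedBall (0:C(K,ℝ)) 1 ↔ ∀ z, |f z| ≤ 1 := by
  rw [Metric.mem_closedBall, dist_zero_right]
  constructor
  · intro h z
    simpa [Real.norm_eq_abs] using (f.norm_coe_le_norm z).trans h
  · intro h
    exact (ContinuousMap.norm_le _ zero_le_one).mpr (by simpa [Real.norm_eq_abs] using h)

private lemma continuous_of_locally_const {f : K → ℝ}
    (h : ∀ z, ∃ U : Set K, IsOpen U ∧ z ∈ U ∧ ∀ w ∈ U, f w = f z) : Continuous f := by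
  rw [continuous_iff_continuousAt]
  intro z
  obtain ⟨U, hU, hz, hc⟩ := h z
  have he : f =ᶠ[nhds z] fun _ => f z :=
    Filter.eventuallyEq_of_mem (hU.mem_nhds hz) (fun w hw => hc w hw)
  exact ContinuousAt.congr continuousAt_const he.symm

private lemma sep (hbasis : TopologicalSpace.IsTopologicalBasis {s : Set K | IsClopen s})
    (q : C(K,ℝ)) {β α : ℝ} (hβα : β < α) :
    ∃ U : Set K, IsClopen U ∧ {z | α ≤ q z} ⊆ U ∧ U ⊆ {z | β < q z} := by
  have hAcl : IsClosed {z | α ≤ q z} := isClosed_le continuous_const (map_continuous q)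
  have hAcp : IsCompact {z | α ≤ q z} := hAcl.isCompact
  have hsub : ∀ z : {z // α ≤ q z}, ∃ v : Set K, IsClopen v ∧ (z : K) ∈ v ∧ v ⊆ {w | β < q w} := by
    intro ⟨z, hz⟩
    have hzo : z ∈ {w | β < q w} := lt_of_lt_of_le hβα hz
    obtain ⟨v, hv, hzv, hvu⟩ := hbasis.exists_subset_of_mem_open hzo
      (isOpen_lt continuous_const (map_continuous q))
    exact ⟨v, hv, hzv, hvu⟩
  choose V hVcl hVmem hVsub using hsub
  obtain ⟨t, ht⟩ := hAcp.elim_finite_subcover V (fun i => (hVcl i).isOpen)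
    (fun z hz => Set.mem_iUnion.mpr ⟨⟨z, hz⟩, hVmem ⟨z, hz⟩⟩)
  refine ⟨⋃ i ∈ t, V i, isClopen_biUnion_finset (fun i _ => hVcl i), ht, ?_⟩
  intro w hw
  obtain ⟨i, _, hi⟩ := Set.mem_iUnion₂.mp hw
  exact hVsub i hi

/-- the ±1 indicator of a clopen set, as an element of the closed unit ball -/
private noncomputable def ind (U : Set K) (hU : IsClopen U) :
    ↥(Metric.closedBall (0:C(K,ℝ)) 1) :=
  ⟨⟨fun z => if z ∈ U then (1:ℝ) else -1, by
      apply continuous_of_locally_const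
      intro z
      by_cases hz : z ∈ U
      · exact ⟨U, hU.isOpen, hz, fun w hw => by simp [hw, hz]⟩
      · exact ⟨Uᶜ, hU.compl.isOpen, hz, fun w hw => by simp [(Set.mem_compl_iff _ _).mp hw, hz]⟩⟩,
    by
      rw [memBall_iff]
      intro z
      by_cases hz : z ∈ U <;> simp [hz]⟩

private lemma ind_abs (U : Set K) (hU : IsClopen U) (z : K) :
    |((ind U hU : ↥(Metric.closedBall (0:C(K,ℝ)) 1)) : C(K,ℝ)) z| = 1 := by
  show |(if z ∈ U then (1:ℝ) else -1)| = 1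
  by_cases hz : z ∈ U <;> simp [hz]


private lemma ind_apply (U : Set K) (hU : IsClopen U) (z : K) :
    ((ind U hU : ↥(Metric.closedBall (0:C(K,ℝ)) 1)) : C(K,ℝ)) z
      = if z ∈ U then (1:ℝ) else -1 := by
  by_cases hz : z ∈ U <;> simp [ind, hz]

variable (Φ Ψ : ↥(Metric.closedBall (0 : C(K, ℝ)) 1) → ↥(Metric.closedBall (0 : C(K, ℝ)) 1))

private lemma key_ineq (hlip : LipschitzWith 1 Φ) (hinv₂ : Function.RightInverse Ψ Φ)
    (g e : ↥(Metric.closedBall (0 : C(K, ℝ)) 1)) (hfix : Φ e = e) :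
    ‖(g : C(K,ℝ)) - e‖ ≤ ‖(Ψ g : C(K,ℝ)) - e‖ := by
  have h1 : dist (Φ (Ψ g)) (Φ e) ≤ 1 * dist (Ψ g) e := hlip.dist_le_mul _ _
  rw [hinv₂ g, hfix, one_mul] at h1
  rw [Subtype.dist_eq, Subtype.dist_eq, dist_eq_norm, dist_eq_norm] at h1
  exact h1

private lemma ball_bound (g : ↥(Metric.closedBall (0 : C(K, ℝ)) 1)) (z : K) :
    |(g : C(K,ℝ)) z| ≤ 1 := (memBall_iff _).mp g.2 z

/-- pointwise expansion of `Ψ` on the positive side -/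
private lemma lemE_pos (hbasis : TopologicalSpace.IsTopologicalBasis {s : Set K | IsClopen s})
    (hlip : LipschitzWith 1 Φ) (hinv₂ : Function.RightInverse Ψ Φ)
    (hP6 : ∀ e : ↥(Metric.closedBall (0 : C(K, ℝ)) 1),
      (∀ x : K, |(e : C(K, ℝ)) x| = 1) → Φ e = e)
    (g : ↥(Metric.closedBall (0 : C(K, ℝ)) 1)) (z : K) (hz : 0 < (g : C(K,ℝ)) z) :
    (g : C(K,ℝ)) z ≤ (Ψ g : C(K,ℝ)) z := by
  by_contra hcon
  push_neg at hcon
  set h : C(K,ℝ) := (Ψ g : C(K,ℝ)) with hh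
  set β : ℝ := max (h z) 0 with hβ
  set α : ℝ := (β + (g : C(K,ℝ)) z) / 2 with hα
  have hβg : β < (g : C(K,ℝ)) z := max_lt hcon hz
  have hβα : β < α := by rw [hα]; linarith
  have hαg : α < (g : C(K,ℝ)) z := by rw [hα]; linarith
  have hβ0 : 0 ≤ β := le_max_right _ _
  have hα0 : 0 < α := lt_of_le_of_lt hβ0 hβα
  obtain ⟨U, hU, hU1, hU2⟩ := sep hbasis h hβα
  have hkey : ‖(g : C(K,ℝ)) - (ind U hU : C(K,ℝ))‖ ≤ ‖h - (ind U hU : C(K,ℝ))‖ :=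
    key_ineq Φ Ψ hlip hinv₂ g (ind U hU) (hP6 _ (ind_abs U hU))
  have hupper : ‖h - (ind U hU : C(K,ℝ))‖ ≤ 1 + α := by
    apply (ContinuousMap.norm_le _ (by linarith)).mpr
    intro w
    rw [ContinuousMap.sub_apply, Real.norm_eq_abs, ind_apply]
    have hw1 : h w ≤ 1 := (abs_le.mp (ball_bound (Ψ g) w)).2
    have hw2 : -1 ≤ h w := (abs_le.mp (ball_bound (Ψ g) w)).1
    by_cases hw : w ∈ U
    · have : β < h w := hU2 hw
      rw [if_pos hw, abs_le]
      constructor <;> linarith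
    · have : h w < α := by
        by_contra hcc
        exact hw (hU1 (le_of_not_gt hcc))
      rw [if_neg hw, abs_le]
      constructor <;> linarith
  have hzU : z ∉ U := by
    intro hmem
    have : β < h z := hU2 hmem
    simp only [hβ] at this
    exact absurd (le_max_left (h z) 0) (not_le.mpr this)
  have hlow : |(g : C(K,ℝ)) z - (if z ∈ U then (1:ℝ) else -1)| ≤ 1 + α := by
    calc |(g : C(K,ℝ)) z - (if z ∈ U then (1:ℝ) else -1)|
        = ‖((g : C(K,ℝ)) - (ind U hU : C(K,ℝ))) z‖ := by
          rw [ContinuousMap.sub_apply, Real.norm_eq_abs, ind_apply]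
      _ ≤ ‖(g : C(K,ℝ)) - (ind U hU : C(K,ℝ))‖ := ContinuousMap.norm_coe_le_norm _ _
      _ ≤ 1 + α := le_trans hkey hupper
  rw [if_neg hzU] at hlow
  have : (g : C(K,ℝ)) z + 1 ≤ 1 + α := by
    have := (abs_le.mp hlow).2
    linarith
  linarith

/-- pointwise expansion of `Ψ` on the negative side -/
private lemma lemE_neg (hbasis : TopologicalSpace.IsTopologicalBasis {s : Set K | IsClopen s})
    (hlip : LipschitzWith 1 Φ) (hinv₂ : Function.RightInverse Ψ Φ)
    (hP6 : ∀ e : ↥(Metric.closedBall (0 : C(K, ℝ)) 1),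
      (∀ x : K, |(e : C(K, ℝ)) x| = 1) → Φ e = e)
    (g : ↥(Metric.closedBall (0 : C(K, ℝ)) 1)) (z : K) (hz : (g : C(K,ℝ)) z < 0) :
    (Ψ g : C(K,ℝ)) z ≤ (g : C(K,ℝ)) z := by
  by_contra hcon
  push_neg at hcon
  set h : C(K,ℝ) := (Ψ g : C(K,ℝ)) with hh
  set β : ℝ := max (-(h z)) 0 with hβ
  set α : ℝ := (β + -((g : C(K,ℝ)) z)) / 2 with hα
  have hβg : β < -((g : C(K,ℝ)) z) := max_lt (by linarith) (by linarith)
  have hβα : β < α := by rw [hα]; linarith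
  have hαg : α < -((g : C(K,ℝ)) z) := by rw [hα]; linarith
  have hβ0 : 0 ≤ β := le_max_right _ _
  have hα0 : 0 < α := lt_of_le_of_lt hβ0 hβα
  obtain ⟨U, hU, hU1, hU2⟩ := sep hbasis (-h) hβα
  -- e := -1 on U, 1 off U : that's the indicator of Uᶜ
  have hUc : IsClopen Uᶜ := hU.compl
  have hkey : ‖(g : C(K,ℝ)) - (ind Uᶜ hUc : C(K,ℝ))‖ ≤ ‖h - (ind Uᶜ hUc : C(K,ℝ))‖ :=
    key_ineq Φ Ψ hlip hinv₂ g (ind Uᶜ hUc) (hP6 _ (ind_abs Uᶜ hUc))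
  have hupper : ‖h - (ind Uᶜ hUc : C(K,ℝ))‖ ≤ 1 + α := by
    apply (ContinuousMap.norm_le _ (by linarith)).mpr
    intro w
    rw [ContinuousMap.sub_apply, Real.norm_eq_abs, ind_apply]
    have hw1 : h w ≤ 1 := (abs_le.mp (ball_bound (Ψ g) w)).2
    have hw2 : -1 ≤ h w := (abs_le.mp (ball_bound (Ψ g) w)).1
    by_cases hw : w ∈ U
    · have : β < -(h w) := hU2 hw
      rw [if_neg (by simpa using hw), abs_le]
      constructor <;> linarith
    · have : -(h w) < α := by
        by_contra hcc
        exact hw (hU1 (by simpa using le_of_not_gt hcc))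
      rw [if_pos (by simpa using hw), abs_le]
      constructor <;> linarith
  have hzU : z ∉ U := by
    intro hmem
    have : β < -(h z) := hU2 hmem
    simp only [hβ] at this
    exact absurd (le_max_left (-(h z)) 0) (not_le.mpr this)
  have hlow : |(g : C(K,ℝ)) z - (if z ∈ Uᶜ then (1:ℝ) else -1)| ≤ 1 + α := by
    calc |(g : C(K,ℝ)) z - (if z ∈ Uᶜ then (1:ℝ) else -1)|
        = ‖((g : C(K,ℝ)) - (ind Uᶜ hUc : C(K,ℝ))) z‖ := by
          rw [ContinuousMap.sub_apply, Real.norm_eq_abs, ind_apply]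
          by_cases hzz : z ∈ Uᶜ <;> simp [hzz]
      _ ≤ ‖(g : C(K,ℝ)) - (ind Uᶜ hUc : C(K,ℝ))‖ := ContinuousMap.norm_coe_le_norm _ _
      _ ≤ 1 + α := le_trans hkey hupper
  rw [if_pos (by simpa using hzU)] at hlow
  have : 1 - (g : C(K,ℝ)) z ≤ 1 + α := by
    have := (abs_le.mp hlow).1
    linarith
  linarith


private lemma psi_eq_of_abs_one (hbasis : TopologicalSpace.IsTopologicalBasis {s : Set K | IsClopen s})
    (hlip : LipschitzWith 1 Φ) (hinv₂ : Function.RightInverse Ψ Φ)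
    (hP6 : ∀ e : ↥(Metric.closedBall (0 : C(K, ℝ)) 1),
      (∀ x : K, |(e : C(K, ℝ)) x| = 1) → Φ e = e)
    (A : ↥(Metric.closedBall (0 : C(K, ℝ)) 1)) (z : K) (h1 : |(A : C(K,ℝ)) z| = 1) :
    (Ψ A : C(K,ℝ)) z = (A : C(K,ℝ)) z := by
  rcases (abs_eq zero_le_one).mp h1 with h | h
  · have h2 := lemE_pos Φ Ψ hbasis hlip hinv₂ hP6 A z (by rw [h]; norm_num)
    have h3 := (abs_le.mp (ball_bound (Ψ A) z)).2
    rw [h] at h2 ⊢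
    linarith
  · have h2 := lemE_neg Φ Ψ hbasis hlip hinv₂ hP6 A z (by rw [h]; norm_num)
    have h3 := (abs_le.mp (ball_bound (Ψ A) z)).1
    rw [h] at h2 ⊢
    linarith

private noncomputable def override [T2Space K] (q : ↥(Metric.closedBall (0 : C(K, ℝ)) 1))
    (x : K) (hx : IsOpen ({x} : Set K)) (v : ℝ) (hv : |v| ≤ 1) :
    ↥(Metric.closedBall (0 : C(K, ℝ)) 1) :=
  ⟨⟨fun w => if w = x then v else (q : C(K,ℝ)) w, by
      rw [continuous_iff_continuousAt]
      intro w
      by_cases hw : w = x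
      · subst hw
        have he : (fun w' => if w' = w then v else (q : C(K,ℝ)) w')
            =ᶠ[nhds w] fun _ => v :=
          Filter.eventuallyEq_of_mem (hx.mem_nhds rfl) (fun u hu => by
            simp only [Set.mem_singleton_iff] at hu
            simp [hu])
        exact (ContinuousAt.congr continuousAt_const he.symm).congr
          (by filter_upwards [he] with u hu using rfl)
      · have he : (fun w' => if w' = x then v else (q : C(K,ℝ)) w')
            =ᶠ[nhds w] fun w' => (q : C(K,ℝ)) w' :=
          Filter.eventuallyEq_of_mem ((isClosed_singleton (x := x)).isOpen_compl.mem_nhds hw)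
            (fun u hu => by
              simp only [Set.mem_compl_iff, Set.mem_singleton_iff] at hu
              simp [hu])
        exact ContinuousAt.congr ((map_continuous (q : C(K,ℝ))).continuousAt) he.symm⟩, by
    rw [memBall_iff]
    intro w
    by_cases hw : w = x
    · simpa [hw] using hv
    · simpa [hw] using ball_bound q w⟩

private lemma override_apply [T2Space K] (q : ↥(Metric.closedBall (0 : C(K, ℝ)) 1))
    (x : K) (hx : IsOpen ({x} : Set K)) (v : ℝ) (hv : |v| ≤ 1) (w : K) :
    ((override q x hx v hv : ↥(Metric.closedBall (0 : C(K, ℝ)) 1)) : C(K,ℝ)) w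
      = if w = x then v else (q : C(K,ℝ)) w := by
  by_cases hw : w = x <;> simp [override, hw]


private lemma anchor [T2Space K]
    (hbasis : TopologicalSpace.IsTopologicalBasis {s : Set K | IsClopen s})
    (hlip : LipschitzWith 1 Φ) (hinv₂ : Function.RightInverse Ψ Φ)
    (hP6 : ∀ e : ↥(Metric.closedBall (0 : C(K, ℝ)) 1),
      (∀ x : K, |(e : C(K, ℝ)) x| = 1) → Φ e = e) :
    ∀ (n : ℕ) (S : Finset K), S.card ≤ n → (∀ z ∈ S, IsOpen ({z} : Set K)) →
      ∀ A : ↥(Metric.closedBall (0 : C(K, ℝ)) 1),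
        (∀ z, z ∉ S → |(A : C(K,ℝ)) z| = 1) → Ψ A = A := by
  intro n
  induction n with
  | zero =>
    intro S hcard hiso A hA
    have hS : S = ∅ := Finset.card_eq_zero.mp (Nat.le_antisymm hcard (Nat.zero_le _))
    apply Subtype.ext
    apply ContinuousMap.ext
    intro z
    exact psi_eq_of_abs_one Φ Ψ hbasis hlip hinv₂ hP6 A z
      (hA z (by simp [hS]))
  | succ n IH =>
    intro S hcard hiso A hA
    apply Subtype.ext
    apply ContinuousMap.ext
    intro z
    by_cases hzS : z ∈ S
    · -- use the two anchors with value ±1 at z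
      have hziso : IsOpen ({z} : Set K) := hiso z hzS
      have key : ∀ σ : ℝ, |σ| = 1 →
          |(A : C(K,ℝ)) z - σ| ≤ |(Ψ A : C(K,ℝ)) z - σ| := by
        intro σ hσ
        set A' := override (Ψ A) z hziso σ (le_of_eq hσ) with hA'
        have hΨA' : Ψ A' = A' := by
          apply IH (S.erase z)
          · have := Finset.card_erase_of_mem hzS
            omega
          · intro w hw
            exact hiso w (Finset.mem_of_mem_erase hw)
          · intro w hw
            rw [override_apply]
            by_cases hwz : w = z
            · rw [if_pos hwz]; exact hσ
            · rw [if_neg hwz]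
              have hwS : w ∉ S := fun hcon => hw (Finset.mem_erase.mpr ⟨hwz, hcon⟩)
              rw [psi_eq_of_abs_one Φ Ψ hbasis hlip hinv₂ hP6 A w (hA w hwS)]
              exact hA w hwS
        have hfix : Φ A' = A' := by
          conv_lhs => rw [← hΨA']
          exact hinv₂ A'
        have hkey : ‖(A : C(K,ℝ)) - (A' : C(K,ℝ))‖ ≤ ‖(Ψ A : C(K,ℝ)) - (A' : C(K,ℝ))‖ :=
          key_ineq Φ Ψ hlip hinv₂ A A' hfix
        have hupper : ‖(Ψ A : C(K,ℝ)) - (A' : C(K,ℝ))‖ ≤ |(Ψ A : C(K,ℝ)) z - σ| := by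
          apply (ContinuousMap.norm_le _ (abs_nonneg _)).mpr
          intro w
          rw [ContinuousMap.sub_apply, Real.norm_eq_abs, override_apply]
          by_cases hwz : w = z
          · rw [if_pos hwz, hwz]
          · rw [if_neg hwz]
            simpa using abs_nonneg ((Ψ A : C(K,ℝ)) z - σ)
        have hlow : |(A : C(K,ℝ)) z - σ| ≤ ‖(A : C(K,ℝ)) - (A' : C(K,ℝ))‖ := by
          have : |((A : C(K,ℝ)) - (A' : C(K,ℝ))) z| ≤ ‖(A : C(K,ℝ)) - (A' : C(K,ℝ))‖ := by
            simpa [Real.norm_eq_abs] using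
              ContinuousMap.norm_coe_le_norm ((A : C(K,ℝ)) - (A' : C(K,ℝ))) z
          rwa [ContinuousMap.sub_apply, override_apply, if_pos rfl] at this
        exact le_trans hlow (le_trans hkey hupper)
      have k1 := key 1 (by norm_num)
      have k2 := key (-1) (by norm_num)
      have ha1 := (abs_le.mp (ball_bound A z)).1
      have ha2 := (abs_le.mp (ball_bound A z)).2
      have hp1 := (abs_le.mp (ball_bound (Ψ A) z)).1
      have hp2 := (abs_le.mp (ball_bound (Ψ A) z)).2
      rw [abs_of_nonpos (by linarith), abs_of_nonpos (by linarith)] at k1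
      rw [abs_of_nonneg (by linarith), abs_of_nonneg (by linarith)] at k2
      linarith
    · exact psi_eq_of_abs_one Φ Ψ hbasis hlip hinv₂ hP6 A z (hA z hzS)

end PhiInvAux
/-- Corollary 11 of the paper: if `u = min { |g z| : z ∈ K' } ≠ 0` and `x` is an isolated
point with `|g x| < u`, then `Φ⁻¹ g x = g x`. -/
theorem Phi_inv_fixes_small_values
    (K : Type*) [TopologicalSpace K] [CompactSpace K] [T2Space K] [Infinite K]
    (hbasis : TopologicalSpace.IsTopologicalBasis {s : Set K | IsClopen s})
    (hdense : Dense {x : K | IsOpen ({x} : Set K)})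
    (Φ Ψ : ↥(Metric.closedBall (0 : C(K, ℝ)) 1) → ↥(Metric.closedBall (0 : C(K, ℝ)) 1))
    (hlip : LipschitzWith 1 Φ)
    (hinv₁ : Function.LeftInverse Ψ Φ) (hinv₂ : Function.RightInverse Ψ Φ)
    (hP1 : ∀ (f : ↥(Metric.closedBall (0 : C(K, ℝ)) 1)) (x : K), IsOpen ({x} : Set K) →
      (f : C(K, ℝ)) x = 0 → (Φ f : C(K, ℝ)) x = 0)
    (hP2 : ∀ (f : ↥(Metric.closedBall (0 : C(K, ℝ)) 1)) (x : K), IsOpen ({x} : Set K) →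
      (f : C(K, ℝ)) x < 0 → (Φ f : C(K, ℝ)) x ≤ 0)
    (hP3 : ∀ (f : ↥(Metric.closedBall (0 : C(K, ℝ)) 1)) (x : K), IsOpen ({x} : Set K) →
      (f : C(K, ℝ)) x > 0 → (Φ f : C(K, ℝ)) x ≥ 0)
    (hP4 : ∀ (g : ↥(Metric.closedBall (0 : C(K, ℝ)) 1)) (x : K), IsOpen ({x} : Set K) →
      (g : C(K, ℝ)) x < 0 → (Ψ g : C(K, ℝ)) x < 0)
    (hP5 : ∀ (g : ↥(Metric.closedBall (0 : C(K, ℝ)) 1)) (x : K), IsOpen ({x} : Set K) →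
      (g : C(K, ℝ)) x > 0 → (Ψ g : C(K, ℝ)) x > 0)
    (hP6 : ∀ g : ↥(Metric.closedBall (0 : C(K, ℝ)) 1),
      (∀ x : K, |(g : C(K, ℝ)) x| = 1) → Φ g = g)
    (g : ↥(Metric.closedBall (0 : C(K, ℝ)) 1)) (u : ℝ)
    (hu : u = sInf ((fun z => |(g : C(K, ℝ)) z|) '' {x : K | ¬ IsOpen ({x} : Set K)}))
    (hu0 : u ≠ 0)
    (x : K) (hx : IsOpen ({x} : Set K)) (hgx : |(g : C(K, ℝ)) x| < u) :
    (Ψ g : C(K, ℝ)) x = (g : C(K, ℝ)) x := by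
  classical
  have hbdd : BddBelow ((fun z => |(g : C(K, ℝ)) z|) '' {x : K | ¬ IsOpen ({x} : Set K)}) :=
    ⟨0, fun y hy => by obtain ⟨w, _, rfl⟩ := hy; exact abs_nonneg _⟩
  have hu_le : ∀ z : K, ¬ IsOpen ({z} : Set K) → u ≤ |(g : C(K,ℝ)) z| := by
    intro z hz
    rw [hu]
    exact csInf_le hbdd ⟨z, hz, rfl⟩
  have hiso_small : ∀ z : K, |(g : C(K,ℝ)) z| < u → IsOpen ({z} : Set K) := by
    intro z hz
    by_contra hcon
    exact absurd (hu_le z hcon) (not_le.mpr hz)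
  have hK' : {z : K | ¬ IsOpen ({z} : Set K)}.Nonempty := by
    rw [Set.nonempty_iff_ne_empty]
    intro hemp
    rw [hemp, Set.image_empty, Real.sInf_empty] at hu
    exact hu0 hu
  obtain ⟨zs, hzs⟩ := hK'
  have hu1 : u ≤ 1 := le_trans (hu_le zs hzs) (ball_bound g zs)
  have hu_nonneg : 0 ≤ u := by
    rw [hu]
    apply Real.sInf_nonneg
    intro y hy
    obtain ⟨w, _, rfl⟩ := hy
    exact abs_nonneg _
  have hu_pos : 0 < u := lt_of_le_of_ne hu_nonneg (Ne.symm hu0)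
  set u' : ℝ := (|(g : C(K,ℝ)) x| + u) / 2 with hu'def
  have hxu' : |(g : C(K,ℝ)) x| < u' := by rw [hu'def]; linarith
  have hu'u : u' < u := by rw [hu'def]; linarith
  have hu'pos : 0 < u' := lt_of_le_of_lt (abs_nonneg _) hxu'
  have hu'1 : u' < 1 := lt_of_lt_of_le hu'u hu1
  set F : Set K := {z | |(g : C(K,ℝ)) z| ≤ u'} with hFdef
  have hFiso : ∀ z ∈ F, IsOpen ({z} : Set K) := fun z hz =>
    hiso_small z (lt_of_le_of_lt hz hu'u)
  have hFcl : IsClosed F := isClosed_le ((map_continuous (g : C(K,ℝ))).abs) continuous_const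
  have hFfin : F.Finite := by
    obtain ⟨t, ht⟩ := hFcl.isCompact.elim_finite_subcover (fun i : F => ({(i : K)} : Set K))
      (fun i => hFiso i i.2) (fun z hz => Set.mem_iUnion.mpr ⟨⟨z, hz⟩, rfl⟩)
    exact Set.Finite.subset (t.finite_toSet.biUnion fun i _ => Set.finite_singleton _) ht
  have hSfin : (F \ {x}).Finite := hFfin.subset Set.diff_subset
  set S : Finset K := hSfin.toFinset with hSdef
  have hSiso : ∀ z ∈ S, IsOpen ({z} : Set K) := by
    intro z hz
    rw [hSdef, Set.Finite.mem_toFinset] at hz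
    exact hFiso z hz.1
  have est : ∀ σ : ℝ, |σ| = 1 →
      |(g : C(K,ℝ)) x - σ| ≤ |(Ψ g : C(K,ℝ)) x - σ| := by
    intro σ hσ
    set ff : K → ℝ := fun w => if w = x then σ else
      (if |(g : C(K,ℝ)) w| ≤ u' then (Ψ g : C(K,ℝ)) w else
        (if 0 < (g : C(K,ℝ)) w then 1 else -1)) with hffdef
    have hcont : Continuous ff := by
      apply continuous_of_locally_const
      intro w
      by_cases hwx : w = x
      · subst hwx
        exact ⟨{w}, hx, rfl, fun v hv => by rw [Set.mem_singleton_iff.mp hv]⟩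
      · by_cases hsm : |(g : C(K,ℝ)) w| ≤ u'
        · exact ⟨{w}, hFiso w hsm, rfl, fun v hv => by rw [Set.mem_singleton_iff.mp hv]⟩
        · push_neg at hsm
          by_cases hpos : 0 < (g : C(K,ℝ)) w
          · refine ⟨{v | u' < |(g : C(K,ℝ)) v|} ∩ {v | 0 < (g : C(K,ℝ)) v}, ?_, ⟨hsm, hpos⟩, ?_⟩
            · exact (isOpen_lt continuous_const ((map_continuous (g : C(K,ℝ))).abs)).inter
                (isOpen_lt continuous_const (map_continuous (g : C(K,ℝ))))
            · intro v hv
              have hvx : v ≠ x := by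
                intro hcon
                rw [hcon] at hv
                exact absurd hv.1 (not_lt.mpr (le_of_lt hxu'))
              simp only [Set.mem_inter_iff, Set.mem_setOf_eq] at hv
              rw [hffdef]
              simp only []
              rw [if_neg hvx, if_neg (not_le.mpr hv.1), if_pos hv.2,
                if_neg hwx, if_neg (not_le.mpr hsm), if_pos hpos]
          · have hneg : (g : C(K,ℝ)) w < 0 := by
              rcases lt_trichotomy ((g : C(K,ℝ)) w) 0 with h | h | h
              · exact h
              · exfalso; rw [h] at hsm; simp at hsm; linarith
              · exact absurd h hpos
            refine ⟨{v | u' < |(g : C(K,ℝ)) v|} ∩ {v | (g : C(K,ℝ)) v < 0}, ?_, ⟨hsm, hneg⟩, ?_⟩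
            · exact (isOpen_lt continuous_const ((map_continuous (g : C(K,ℝ))).abs)).inter
                (isOpen_lt (map_continuous (g : C(K,ℝ))) continuous_const)
            · intro v hv
              have hvx : v ≠ x := by
                intro hcon
                rw [hcon] at hv
                exact absurd hv.1 (not_lt.mpr (le_of_lt hxu'))
              simp only [Set.mem_inter_iff, Set.mem_setOf_eq] at hv
              rw [hffdef]
              simp only []
              rw [if_neg hvx, if_neg (not_le.mpr hv.1), if_neg (not_lt.mpr (le_of_lt hv.2)),
                if_neg hwx, if_neg (not_le.mpr hsm), if_neg hpos]
    have hmem : (⟨ff, hcont⟩ : C(K,ℝ)) ∈ Metric.closedBall (0 : C(K,ℝ)) 1 := by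
      rw [memBall_iff]
      intro w
      show |ff w| ≤ 1
      rw [hffdef]
      simp only []
      by_cases hwx : w = x
      · rw [if_pos hwx, hσ]
      · rw [if_neg hwx]
        by_cases hsm : |(g : C(K,ℝ)) w| ≤ u'
        · rw [if_pos hsm]; exact ball_bound (Ψ g) w
        · rw [if_neg hsm]
          by_cases hpos : 0 < (g : C(K,ℝ)) w
          · rw [if_pos hpos]; norm_num
          · rw [if_neg hpos]; norm_num
    set A' : ↥(Metric.closedBall (0 : C(K, ℝ)) 1) := ⟨⟨ff, hcont⟩, hmem⟩ with hA'def
    have hA'apply : ∀ w, (A' : C(K,ℝ)) w = ff w := fun w => rfl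
    have habs : ∀ z, z ∉ S → |(A' : C(K,ℝ)) z| = 1 := by
      intro z hz
      rw [hSdef, Set.Finite.mem_toFinset] at hz
      rw [hA'apply, hffdef]
      simp only []
      by_cases hzx : z = x
      · rw [if_pos hzx]; exact hσ
      · rw [if_neg hzx]
        have hzF : z ∉ F := by
          intro hcon
          exact hz ⟨hcon, hzx⟩
        rw [hFdef] at hzF
        simp only [Set.mem_setOf_eq] at hzF
        rw [if_neg hzF]
        by_cases hpos : 0 < (g : C(K,ℝ)) z
        · rw [if_pos hpos]; norm_num
        · rw [if_neg hpos]; norm_num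
    have hΨA' : Ψ A' = A' := anchor Φ Ψ hbasis hlip hinv₂ hP6 S.card S le_rfl hSiso A' habs
    have hfix : Φ A' = A' := by
      conv_lhs => rw [← hΨA']
      exact hinv₂ A'
    have hkey : ‖(g : C(K,ℝ)) - (A' : C(K,ℝ))‖ ≤ ‖(Ψ g : C(K,ℝ)) - (A' : C(K,ℝ))‖ :=
      key_ineq Φ Ψ hlip hinv₂ g A' hfix
    have hupper : ‖(Ψ g : C(K,ℝ)) - (A' : C(K,ℝ))‖ ≤
        max (|(Ψ g : C(K,ℝ)) x - σ|) (1 - u') := by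
      apply (ContinuousMap.norm_le _ ?_).mpr
      swap
      · exact le_trans (by linarith) (le_max_right _ _)
      intro w
      rw [ContinuousMap.sub_apply, Real.norm_eq_abs, hA'apply, hffdef]
      simp only []
      by_cases hwx : w = x
      · rw [if_pos hwx, hwx]
        exact le_max_left _ _
      · rw [if_neg hwx]
        by_cases hsm : |(g : C(K,ℝ)) w| ≤ u'
        · rw [if_pos hsm]
          simp only [sub_self, abs_zero]
          exact le_trans (by linarith) (le_max_right _ _)
        · push_neg at hsm
          rw [if_neg (not_le.mpr hsm)]
          by_cases hpos : 0 < (g : C(K,ℝ)) w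
          · rw [if_pos hpos]
            have h1 : (g : C(K,ℝ)) w ≤ (Ψ g : C(K,ℝ)) w :=
              lemE_pos Φ Ψ hbasis hlip hinv₂ hP6 g w hpos
            have h2 : (Ψ g : C(K,ℝ)) w ≤ 1 := (abs_le.mp (ball_bound (Ψ g) w)).2
            have h3 : u' < (g : C(K,ℝ)) w := by
              rwa [abs_of_pos hpos] at hsm
            refine le_trans ?_ (le_max_right _ _)
            rw [abs_of_nonpos (by linarith)]
            linarith
          · have hneg : (g : C(K,ℝ)) w < 0 := by
              rcases lt_trichotomy ((g : C(K,ℝ)) w) 0 with h | h | h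
              · exact h
              · exfalso; rw [h] at hsm; simp at hsm; linarith
              · exact absurd h hpos
            rw [if_neg hpos]
            have h1 : (Ψ g : C(K,ℝ)) w ≤ (g : C(K,ℝ)) w :=
              lemE_neg Φ Ψ hbasis hlip hinv₂ hP6 g w hneg
            have h2 : -1 ≤ (Ψ g : C(K,ℝ)) w := (abs_le.mp (ball_bound (Ψ g) w)).1
            have h3 : u' < -((g : C(K,ℝ)) w) := by
              rwa [abs_of_neg hneg] at hsm
            refine le_trans ?_ (le_max_right _ _)
            rw [abs_of_nonneg (by linarith)]
            linarith
    have hlow : |(g : C(K,ℝ)) x - σ| ≤ ‖(g : C(K,ℝ)) - (A' : C(K,ℝ))‖ := by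
      have h := ContinuousMap.norm_coe_le_norm ((g : C(K,ℝ)) - (A' : C(K,ℝ))) x
      rw [ContinuousMap.sub_apply, Real.norm_eq_abs, hA'apply, hffdef] at h
      simp only [if_true, eq_self_iff_true] at h
      exact h
    have hgap : 1 - u' < |(g : C(K,ℝ)) x - σ| := by
      have h1 : |σ| - |(g : C(K,ℝ)) x| ≤ |σ - (g : C(K,ℝ)) x| := abs_sub_abs_le_abs_sub _ _
      rw [hσ, abs_sub_comm] at h1
      linarith
    have hfinal := le_trans hlow (le_trans hkey hupper)
    rcases le_max_iff.mp hfinal with h | h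
    · exact h
    · linarith
  have e1 := est 1 (by norm_num)
  have e2 := est (-1) (by norm_num)
  have hg1 := (abs_le.mp (ball_bound g x)).1
  have hg2 := (abs_le.mp (ball_bound g x)).2
  have hp1 := (abs_le.mp (ball_bound (Ψ g) x)).1
  have hp2 := (abs_le.mp (ball_bound (Ψ g) x)).2
  rw [abs_of_nonpos (by linarith), abs_of_nonpos (by linarith)] at e1
  rw [abs_of_nonneg (by linarith), abs_of_nonneg (by linarith)] at e2
  linarith
end

section
/- Let K be an infinite zero-dimensional compact Hausdorff space whose set of isolated points is dense, B the closed unit ball of C(K), and Φ : B → B a non-expansive bijection satisfying properties (1)–(6). Let V₁, …, V_N be pairwise disjoint clopen subsets of K, each meeting K', whose union contains K', let h = (h₁, …, h_N) ∈ [-1,1]^N, and set B_{V,h} = { f ∈ B : f ≡ h_i on V_i for each i }. Assume that min{ |h_i| : 1 ≤ i ≤ N } ≠ 0 and that Φ(B_{V,h}) = B_{V,h}. Then Φ(f) = f for every f ∈ B_{V,h}. -/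
theorem aux_isometry_of_compact {X : Type*} [MetricSpace X] {s : Set X} (hs : IsCompact s)
    {T : X → X} (hT : T '' s = s)
    (hne : ∀ a ∈ s, ∀ b ∈ s, dist (T a) (T b) ≤ dist a b) :
    ∀ a ∈ s, ∀ b ∈ s, dist a b ≤ dist (T a) (T b) := by
  have hmaps : ∀ a ∈ s, T a ∈ s := by
    intro a ha; rw [← hT]; exact ⟨a, ha, rfl⟩
  have hiter_mem : ∀ n, ∀ a ∈ s, T^[n] a ∈ s := by
    intro n
    induction n with
    | zero => intro a ha; simpa using ha
    | succ n ih =>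
      intro a ha
      rw [Function.iterate_succ_apply]
      exact ih _ (hmaps a ha)
  have hiter_ne : ∀ n, ∀ a ∈ s, ∀ b ∈ s, dist (T^[n] a) (T^[n] b) ≤ dist a b := by
    intro n
    induction n with
    | zero => intro a ha b hb; simp
    | succ n ih =>
      intro a ha b hb
      rw [Function.iterate_succ_apply, Function.iterate_succ_apply]
      exact le_trans (ih _ (hmaps a ha) _ (hmaps b hb)) (hne a ha b hb)
  have hsurj : ∀ n, ∀ a ∈ s, ∃ a' ∈ s, T^[n] a' = a := by
    intro n
    induction n with
    | zero => intro a ha; exact ⟨a, ha, rfl⟩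
    | succ n ih =>
      intro a ha
      obtain ⟨b, hb, hb'⟩ := ih a ha
      have : b ∈ T '' s := by rw [hT]; exact hb
      obtain ⟨c, hc, hc'⟩ := this
      exact ⟨c, hc, by rw [Function.iterate_succ_apply, hc', hb']⟩
  intro a ha b hb
  have key : ∀ ε : ℝ, 0 < ε → dist a b ≤ dist (T a) (T b) + 2 * ε := by
    intro ε hε
    -- choose preimage chains
    have hchoice : ∀ n : ℕ, ∃ p : X × X, (p.1 ∈ s ∧ p.2 ∈ s) ∧ T^[n] p.1 = a ∧ T^[n] p.2 = b := by
      intro n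
      obtain ⟨a', ha', ha''⟩ := hsurj n a ha
      obtain ⟨b', hb', hb''⟩ := hsurj n b hb
      exact ⟨(a', b'), ⟨ha', hb'⟩, ha'', hb''⟩
    choose c hc1 hc2 hc3 using hchoice
    have hcs : ∀ n, c n ∈ s ×ˢ s := fun n => ⟨(hc1 n).1, (hc1 n).2⟩
    obtain ⟨p, _, φ, hφ, hconv⟩ := (hs.prod hs).tendsto_subseq hcs
    rw [Metric.tendsto_atTop] at hconv
    obtain ⟨Nn, hNn⟩ := hconv (ε / 2) (by linarith)
    set m := φ Nn with hm
    set n := φ (Nn + 1) with hn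
    have hmn : m < n := hφ (Nat.lt_succ_self Nn)
    have hd : dist (c n) (c m) < ε := by
      have h1 := hNn Nn le_rfl
      have h2 := hNn (Nn + 1) (Nat.le_succ Nn)
      calc dist (c n) (c m) ≤ dist (c n) p + dist (c m) p := dist_triangle_right _ _ _
        _ < ε / 2 + ε / 2 := by exact add_lt_add h2 h1
        _ = ε := by ring
    have hd1 : dist (c n).1 (c m).1 < ε := lt_of_le_of_lt (le_max_left _ _) (by rwa [← Prod.dist_eq])
    have hd2 : dist (c n).2 (c m).2 < ε := lt_of_le_of_lt (le_max_right _ _) (by rwa [← Prod.dist_eq])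
    set a' := T^[m] (c n).1 with ha'
    set b' := T^[m] (c n).2 with hb'
    have ha's : a' ∈ s := hiter_mem m _ (hc1 n).1
    have hb's : b' ∈ s := hiter_mem m _ (hc1 n).2
    have hda : dist a' a ≤ ε := by
      rw [ha', ← hc2 m]
      exact le_of_lt (lt_of_le_of_lt (hiter_ne m _ (hc1 n).1 _ (hc1 m).1) hd1)
    have hdb : dist b' b ≤ ε := by
      rw [hb', ← hc3 m]
      exact le_of_lt (lt_of_le_of_lt (hiter_ne m _ (hc1 n).2 _ (hc1 m).2) hd2)
    obtain ⟨k, hk⟩ : ∃ k, n - m = k + 1 := ⟨n - m - 1, by omega⟩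
    have hmk : k + 1 + m = n := by omega
    have hita : T^[k + 1] a' = a := by
      rw [ha', ← Function.iterate_add_apply, hmk]
      exact hc2 n
    have hitb : T^[k + 1] b' = b := by
      rw [hb', ← Function.iterate_add_apply, hmk]
      exact hc3 n
    have step : dist a b ≤ dist (T a') (T b') := by
      rw [← hita, ← hitb, Function.iterate_succ_apply, Function.iterate_succ_apply]
      exact hiter_ne k _ (hmaps _ ha's) _ (hmaps _ hb's)
    have step2 : dist (T a') (T b') ≤ dist (T a) (T b) + 2 * ε := by
      have h1 : dist (T a') (T a) ≤ ε := le_trans (hne _ ha's _ ha) hda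
      have h2 : dist (T b') (T b) ≤ ε := le_trans (hne _ hb's _ hb) hdb
      calc dist (T a') (T b') ≤ dist (T a') (T a) + dist (T a) (T b) + dist (T b) (T b') :=
            dist_triangle4 _ _ _ _
        _ ≤ ε + dist (T a) (T b) + ε := by
            gcongr
            rwa [dist_comm]
        _ = dist (T a) (T b) + 2 * ε := by ring
    linarith
  by_contra hcon
  push_neg at hcon
  have := key ((dist a b - dist (T a) (T b)) / 4) (by linarith)
  linarith

open Classical in
noncomputable def clopenInd {K : Type*} [TopologicalSpace K] (s : Set K) (hs : IsClopen s) :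
    C(K, ℝ) :=
  ⟨fun z => if z ∈ s then (1 : ℝ) else 0, by
    apply Continuous.if _ continuous_const continuous_const
    intro a ha
    have : frontier {z : K | z ∈ s} = ∅ := hs.frontier_eq
    rw [this] at ha
    exact absurd ha (Set.notMem_empty a)⟩

lemma clopenInd_apply_mem {K : Type*} [TopologicalSpace K] {s : Set K} (hs : IsClopen s)
    {z : K} (hz : z ∈ s) : clopenInd s hs z = 1 := by simp [clopenInd, hz]

lemma clopenInd_apply_notMem {K : Type*} [TopologicalSpace K] {s : Set K} (hs : IsClopen s)
    {z : K} (hz : z ∉ s) : clopenInd s hs z = 0 := by simp [clopenInd, hz]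

noncomputable def uFun {K : Type*} [TopologicalSpace K] (N : ℕ) (V : Fin N → Set K)
    (hV : ∀ i, IsClopen (V i)) (h : Fin N → ℝ) (x : K) (hx : IsClopen ({x} : Set K))
    (t : ℝ) : C(K, ℝ) :=
  t • clopenInd {x} hx + ∑ i : Fin N, h i • clopenInd (V i) (hV i)

section uval
variable {K : Type*} [TopologicalSpace K] {N : ℕ} {V : Fin N → Set K}
  (hV : ∀ i, IsClopen (V i)) (h : Fin N → ℝ) {x : K} (hx : IsClopen ({x} : Set K))
  (t : ℝ)

lemma uFun_apply (z : K) : uFun N V hV h x hx t z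
    = t * clopenInd {x} hx z + ∑ i : Fin N, h i * clopenInd (V i) (hV i) z := by
  simp only [uFun, ContinuousMap.add_apply, ContinuousMap.smul_apply, smul_eq_mul]
  congr 1
  rw [ContinuousMap.coe_sum]
  simp only [Finset.sum_apply, ContinuousMap.smul_apply, smul_eq_mul]

lemma uFun_apply_V (hdisj : ∀ i j, i ≠ j → Disjoint (V i) (V j))
    (hxW : x ∉ ⋃ i, V i) {j : Fin N} {z : K} (hz : z ∈ V j) :
    uFun N V hV h x hx t z = h j := by
  rw [uFun_apply]
  have hzx : z ∉ ({x} : Set K) := by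
    rintro rfl
    exact hxW (Set.mem_iUnion.mpr ⟨j, hz⟩)
  rw [clopenInd_apply_notMem hx hzx, mul_zero, zero_add]
  rw [Finset.sum_eq_single j]
  · rw [clopenInd_apply_mem (hV j) hz, mul_one]
  · intro i _ hij
    have : z ∉ V i := fun hzi => (hdisj i j hij).ne_of_mem hzi hz rfl
    rw [clopenInd_apply_notMem (hV i) this, mul_zero]
  · intro hj; exact absurd (Finset.mem_univ j) hj

lemma uFun_apply_self (hxW : x ∉ ⋃ i, V i) : uFun N V hV h x hx t x = t := by
  rw [uFun_apply, clopenInd_apply_mem hx rfl, mul_one]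
  have : ∀ i : Fin N, h i * clopenInd (V i) (hV i) x = 0 := fun i => by
    rw [clopenInd_apply_notMem (hV i) (fun hxi => hxW (Set.mem_iUnion.mpr ⟨i, hxi⟩)), mul_zero]
  rw [Finset.sum_congr rfl fun i _ => this i, Finset.sum_const_zero, add_zero]

lemma uFun_apply_zero {z : K} (hzW : z ∉ ⋃ i, V i) (hzx : z ≠ x) :
    uFun N V hV h x hx t z = 0 := by
  rw [uFun_apply, clopenInd_apply_notMem hx (by simpa using hzx), mul_zero, zero_add]
  have : ∀ i : Fin N, h i * clopenInd (V i) (hV i) z = 0 := fun i => by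
    rw [clopenInd_apply_notMem (hV i) (fun hzi => hzW (Set.mem_iUnion.mpr ⟨i, hzi⟩)), mul_zero]
  rw [Finset.sum_congr rfl fun i _ => this i, Finset.sum_const_zero]

end uval

open Classical in

noncomputable def eFun {K : Type*} [TopologicalSpace K] {N : ℕ} (V : Fin N → Set K)
    (hV : ∀ i, IsClopen (V i)) (h : Fin N → ℝ) (Wf : Finset K)
    (hW : ∀ z ∈ Wf, IsClopen ({z} : Set K)) (v : K → ℝ) : C(K, ℝ) :=
  (∑ z ∈ Wf.attach, v z.1 • clopenInd {z.1} (hW z.1 z.2)) + ∑ i : Fin N, h i • clopenInd (V i) (hV i)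

section eval
variable {K : Type*} [TopologicalSpace K] {N : ℕ} {V : Fin N → Set K}
  (hV : ∀ i, IsClopen (V i)) (h : Fin N → ℝ) {Wf : Finset K}
  (hW : ∀ z ∈ Wf, IsClopen ({z} : Set K)) (v : K → ℝ)

lemma eFun_apply (z : K) : eFun V hV h Wf hW v z
    = (∑ y ∈ Wf.attach, v y.1 * clopenInd {y.1} (hW y.1 y.2) z)
      + ∑ i : Fin N, h i * clopenInd (V i) (hV i) z := by
  simp only [eFun, ContinuousMap.add_apply]
  congr 1 <;>
  · rw [ContinuousMap.coe_sum]
    simp only [Finset.sum_apply, ContinuousMap.smul_apply, smul_eq_mul]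

lemma eFun_apply_V (hWV : ∀ z ∈ Wf, z ∉ ⋃ i, V i)
    (hdisj : ∀ i j, i ≠ j → Disjoint (V i) (V j))
    {j : Fin N} {z : K} (hz : z ∈ V j) : eFun V hV h Wf hW v z = h j := by
  rw [eFun_apply]
  have h1 : ∀ y ∈ Wf.attach, v y.1 * clopenInd {y.1} (hW y.1 y.2) z = 0 := by
    intro y _
    have : z ∉ ({y.1} : Set K) := by
      intro hzy
      have hz2 : z = y.1 := hzy
      exact hWV y.1 y.2 (Set.mem_iUnion.mpr ⟨j, hz2 ▸ hz⟩)
    rw [clopenInd_apply_notMem _ this, mul_zero]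
  rw [Finset.sum_congr rfl h1, Finset.sum_const_zero, zero_add]
  rw [Finset.sum_eq_single j]
  · rw [clopenInd_apply_mem (hV j) hz, mul_one]
  · intro i _ hij
    have : z ∉ V i := fun hzi => (hdisj i j hij).ne_of_mem hzi hz rfl
    rw [clopenInd_apply_notMem (hV i) this, mul_zero]
  · intro hj; exact absurd (Finset.mem_univ j) hj

lemma eFun_apply_W (hWV : ∀ z ∈ Wf, z ∉ ⋃ i, V i) {z : K} (hz : z ∈ Wf) : eFun V hV h Wf hW v z = v z := by
  rw [eFun_apply]
  have h2 : ∀ i : Fin N, h i * clopenInd (V i) (hV i) z = 0 := fun i => by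
    rw [clopenInd_apply_notMem (hV i)
      (fun hzi => hWV z hz (Set.mem_iUnion.mpr ⟨i, hzi⟩)), mul_zero]
  rw [Finset.sum_congr rfl fun i _ => h2 i, Finset.sum_const_zero, add_zero]
  rw [Finset.sum_eq_single (⟨z, hz⟩ : {x // x ∈ Wf})]
  · show v z * clopenInd {z} (hW z hz) z = v z
    rw [clopenInd_apply_mem _ (Set.mem_singleton z), mul_one]
  · intro y _ hy
    have : z ∉ ({y.1} : Set K) := by
      intro hzy
      have hz2 : z = y.1 := hzy
      exact hy (Subtype.ext hz2.symm)
    rw [clopenInd_apply_notMem _ this, mul_zero]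
  · intro hj; exact absurd (Finset.mem_attach _ _) hj

lemma eFun_continuous [CompactSpace K] : Continuous (fun v : K → ℝ => eFun V hV h Wf hW v) := by
  unfold eFun
  apply Continuous.add
  · apply continuous_finset_sum
    intro y _
    exact Continuous.smul (continuous_apply y.1) continuous_const
  · exact continuous_const

end eval

lemma ball_pt_s13 {K : Type*} [TopologicalSpace K] [CompactSpace K]
    {g : C(K, ℝ)} (hg : g ∈ Metric.closedBall (0 : C(K, ℝ)) 1) (z : K) : |g z| ≤ 1 := by
  rw [Metric.mem_closedBall] at hg
  have := ContinuousMap.dist_apply_le_dist (f := g) (g := (0 : C(K, ℝ))) z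
  rw [ContinuousMap.zero_apply, Real.dist_eq, sub_zero] at this
  exact le_trans this hg

lemma mem_ball_of_pt {K : Type*} [TopologicalSpace K] [CompactSpace K]
    {g : C(K, ℝ)} (hg : ∀ z, |g z| ≤ 1) : g ∈ Metric.closedBall (0 : C(K, ℝ)) 1 := by
  rw [Metric.mem_closedBall]
  rw [ContinuousMap.dist_le zero_le_one]
  intro z
  rw [ContinuousMap.zero_apply, Real.dist_eq, sub_zero]
  exact hg z

lemma S_isCompact {K : Type*} [TopologicalSpace K] [CompactSpace K]
    {N : ℕ} {V : Fin N → Set K} (hV : ∀ i, IsClopen (V i))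
    (hdisj : ∀ i j, i ≠ j → Disjoint (V i) (V j))
    {h : Fin N → ℝ} (hrange : ∀ i, h i ∈ Set.Icc (-1 : ℝ) 1)
    (hWfin : Set.Finite ((⋃ i, V i)ᶜ))
    (hWcl : ∀ z : K, z ∉ (⋃ i, V i) → IsClopen ({z} : Set K)) :
    IsCompact {f : ↥(Metric.closedBall (0 : C(K, ℝ)) 1) |
      ∀ i, ∀ x ∈ V i, (f : C(K, ℝ)) x = h i} := by
  rw [Subtype.isCompact_iff]
  have hWmem : ∀ z : K, z ∈ hWfin.toFinset ↔ z ∉ ⋃ i, V i := fun z => by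
    rw [Set.Finite.mem_toFinset]; rfl
  set Wf := hWfin.toFinset with hWf
  have hW : ∀ z ∈ Wf, IsClopen ({z} : Set K) := fun z hz => hWcl z ((hWmem z).1 hz)
  have hWV : ∀ z ∈ Wf, z ∉ ⋃ i, V i := fun z hz => (hWmem z).1 hz
  have himg : Subtype.val '' {f : ↥(Metric.closedBall (0 : C(K, ℝ)) 1) |
        ∀ i, ∀ x ∈ V i, (f : C(K, ℝ)) x = h i}
      = eFun V hV h Wf hW '' (Set.pi Set.univ fun _ : K => Set.Icc (-1 : ℝ) 1) := by
    ext g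
    constructor
    · rintro ⟨f, hfS, rfl⟩
      refine ⟨fun z => (f : C(K, ℝ)) z, ?_, ?_⟩
      · intro z _
        exact abs_le.mp (ball_pt_s13 f.2 z)
      · apply ContinuousMap.ext
        intro z
        by_cases hz : z ∈ ⋃ i, V i
        · obtain ⟨i, hzi⟩ := Set.mem_iUnion.mp hz
          rw [eFun_apply_V hV h hW _ hWV hdisj hzi]
          exact (hfS i z hzi).symm
        · rw [eFun_apply_W hV h hW _ hWV ((hWmem z).2 hz)]
    · rintro ⟨v, hv, rfl⟩
      have hball : eFun V hV h Wf hW v ∈ Metric.closedBall (0 : C(K, ℝ)) 1 := by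
        apply mem_ball_of_pt
        intro z
        by_cases hz : z ∈ ⋃ i, V i
        · obtain ⟨i, hzi⟩ := Set.mem_iUnion.mp hz
          rw [eFun_apply_V hV h hW _ hWV hdisj hzi]
          exact abs_le.mpr ⟨(hrange i).1, (hrange i).2⟩
        · rw [eFun_apply_W hV h hW _ hWV ((hWmem z).2 hz)]
          exact abs_le.mpr (hv z (Set.mem_univ z))
      exact ⟨⟨eFun V hV h Wf hW v, hball⟩, fun i x hx => eFun_apply_V hV h hW _ hWV hdisj hx, rfl⟩
  rw [himg]
  exact (isCompact_univ_pi fun _ => isCompact_Icc).image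
    (eFun_continuous hV h hW)

section det
variable {K : Type*} [TopologicalSpace K] [CompactSpace K] {N : ℕ} {V : Fin N → Set K}
  {hV : ∀ i, IsClopen (V i)} (hdisj : ∀ i j, i ≠ j → Disjoint (V i) (V j))
  {h : Fin N → ℝ} {x : K} (hxW : x ∉ ⋃ i, V i) {hx : IsClopen ({x} : Set K)}

lemma u_dist_le (hdisj : ∀ i j, i ≠ j → Disjoint (V i) (V j)) (hxW : x ∉ ⋃ i, V i)
    {g : C(K, ℝ)} (hgS : ∀ i, ∀ z ∈ V i, g z = h i) {t r : ℝ} (hr : 0 ≤ r)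
    (hxr : |g x - t| ≤ r) (hor : ∀ z, z ∉ ⋃ i, V i → z ≠ x → |g z| ≤ r) :
    dist g (uFun N V hV h x hx t) ≤ r := by
  rw [ContinuousMap.dist_le hr]
  intro z
  rw [Real.dist_eq]
  by_cases hz : z ∈ ⋃ i, V i
  · obtain ⟨i, hzi⟩ := Set.mem_iUnion.mp hz
    rw [hgS i z hzi, uFun_apply_V hV h hx t hdisj hxW hzi, sub_self, abs_zero]
    exact hr
  · by_cases hzx : z = x
    · subst hzx
      rw [uFun_apply_self hV h hx t hxW]
      exact hxr
    · rw [uFun_apply_zero hV h hx t hz hzx, sub_zero]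
      exact hor z hz hzx

include hxW in
lemma u_dist_ge (g : C(K, ℝ)) (t : ℝ) :
    |g x - t| ≤ dist g (uFun N V hV h x hx t) := by
  have := ContinuousMap.dist_apply_le_dist (f := g) (g := uFun N V hV h x hx t) x
  rw [Real.dist_eq, uFun_apply_self hV h hx t hxW] at this
  exact this

include hdisj hxW in
lemma determination
    (p q : ↥(Metric.closedBall (0 : C(K, ℝ)) 1))
    (hp : ∀ i, ∀ z ∈ V i, (p : C(K, ℝ)) z = h i)
    (hq : ∀ i, ∀ z ∈ V i, (q : C(K, ℝ)) z = h i)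
    (hd : ∀ t ∈ Set.Icc (-1 : ℝ) 1,
      dist (p : C(K, ℝ)) (uFun N V hV h x hx t) = dist (q : C(K, ℝ)) (uFun N V hV h x hx t))
    (hlt : (p : C(K, ℝ)) x < (q : C(K, ℝ)) x) : False := by
  set a := (p : C(K, ℝ)) x with haeq
  set b := (q : C(K, ℝ)) x with hbeq
  have ha : |a| ≤ 1 := ball_pt_s13 p.2 x
  have hb : |b| ≤ 1 := ball_pt_s13 q.2 x
  have haI : a ∈ Set.Icc (-1 : ℝ) 1 := abs_le.mp ha
  have hbI : b ∈ Set.Icc (-1 : ℝ) 1 := abs_le.mp hb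
  set M := dist (p : C(K, ℝ)) (uFun N V hV h x hx a) with hMeq
  have hM0 : 0 ≤ M := dist_nonneg
  have hM1 : M ≤ 1 := by
    apply u_dist_le hdisj hxW hp zero_le_one
    · rw [sub_self, abs_zero]; exact zero_le_one
    · intro z _ _; exact ball_pt_s13 p.2 z
  have hMba : |b - a| ≤ M := by
    rw [hMeq, hd a haI]
    exact u_dist_ge hxW _ a
  -- pointwise bounds off x
  have hpz : ∀ z, z ∉ (⋃ i, V i) → z ≠ x → |(p : C(K, ℝ)) z| ≤ M := by
    intro z hz hzx
    have := u_dist_ge (hx := hx) (h := h) (hV := hV) hxW (p : C(K, ℝ)) a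
    have h2 := ContinuousMap.dist_apply_le_dist
      (f := (p : C(K, ℝ))) (g := uFun N V hV h x hx a) z
    rw [Real.dist_eq, uFun_apply_zero hV h hx a hz hzx, sub_zero] at h2
    exact h2
  have hMq : dist (q : C(K, ℝ)) (uFun N V hV h x hx b) ≤ M := by
    rw [← hd b hbI]
    apply u_dist_le hdisj hxW hp hM0
    · rw [abs_sub_comm]; exact hMba
    · exact hpz
  have hqz : ∀ z, z ∉ (⋃ i, V i) → z ≠ x → |(q : C(K, ℝ)) z| ≤ M := by
    intro z hz hzx
    have h2 := ContinuousMap.dist_apply_le_dist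
      (f := (q : C(K, ℝ))) (g := uFun N V hV h x hx b) z
    rw [Real.dist_eq, uFun_apply_zero hV h hx b hz hzx, sub_zero] at h2
    exact le_trans h2 hMq
  -- t = -1
  have hbM : b + 1 ≤ M := by
    have h1 : b + 1 ≤ dist (q : C(K, ℝ)) (uFun N V hV h x hx (-1)) := by
      have := u_dist_ge (hx := hx) (h := h) (hV := hV) hxW (q : C(K, ℝ)) (-1)
      rw [sub_neg_eq_add, abs_of_nonneg (by linarith [hbI.1])] at this
      exact this
    have h2 : dist (p : C(K, ℝ)) (uFun N V hV h x hx (-1)) ≤ max (a + 1) M := by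
      apply u_dist_le hdisj hxW hp (le_trans hM0 (le_max_right _ _))
      · rw [sub_neg_eq_add, abs_of_nonneg (by linarith [haI.1])]
        exact le_max_left _ _
      · intro z hz hzx; exact le_trans (hpz z hz hzx) (le_max_right _ _)
    rw [← hd (-1) ⟨le_refl _, by norm_num⟩] at h1
    rcases le_max_iff.mp (le_trans h1 h2) with hc | hc
    · linarith
    · exact hc
  -- t = 1
  have haM : 1 - a ≤ M := by
    have h1 : 1 - a ≤ dist (p : C(K, ℝ)) (uFun N V hV h x hx 1) := by
      have := u_dist_ge (hx := hx) (h := h) (hV := hV) hxW (p : C(K, ℝ)) 1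
      rw [abs_sub_comm, abs_of_nonneg (by linarith [haI.2])] at this
      exact this
    have h2 : dist (q : C(K, ℝ)) (uFun N V hV h x hx 1) ≤ max (1 - b) M := by
      apply u_dist_le hdisj hxW hq (le_trans hM0 (le_max_right _ _))
      · rw [abs_sub_comm, abs_of_nonneg (by linarith [hbI.2])]
        exact le_max_left _ _
      · intro z hz hzx; exact le_trans (hqz z hz hzx) (le_max_right _ _)
    rw [hd 1 ⟨by norm_num, le_refl _⟩] at h1
    rcases le_max_iff.mp (le_trans h1 h2) with hc | hc
    · linarith
    · exact hc
  linarith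

end det

/-- Fact 10 of the paper: if `Φ` maps `B_{V,h}` onto itself and `min |hᵢ| ≠ 0`, then `Φ` is
the identity on `B_{V,h}`. -/
theorem Phi_id_on_BVh_of_stable
    (K : Type*) [TopologicalSpace K] [CompactSpace K] [T2Space K] [Infinite K]
    (hbasis : TopologicalSpace.IsTopologicalBasis {s : Set K | IsClopen s})
    (hdense : Dense {x : K | IsOpen ({x} : Set K)})
    (Φ Ψ : ↥(Metric.closedBall (0 : C(K, ℝ)) 1) → ↥(Metric.closedBall (0 : C(K, ℝ)) 1))
    (hlip : LipschitzWith 1 Φ)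
    (hinv₁ : Function.LeftInverse Ψ Φ) (hinv₂ : Function.RightInverse Ψ Φ)
    (hP1 : ∀ (f : ↥(Metric.closedBall (0 : C(K, ℝ)) 1)) (x : K), IsOpen ({x} : Set K) →
      (f : C(K, ℝ)) x = 0 → (Φ f : C(K, ℝ)) x = 0)
    (hP2 : ∀ (f : ↥(Metric.closedBall (0 : C(K, ℝ)) 1)) (x : K), IsOpen ({x} : Set K) →
      (f : C(K, ℝ)) x < 0 → (Φ f : C(K, ℝ)) x ≤ 0)
    (hP3 : ∀ (f : ↥(Metric.closedBall (0 : C(K, ℝ)) 1)) (x : K), IsOpen ({x} : Set K) →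
      (f : C(K, ℝ)) x > 0 → (Φ f : C(K, ℝ)) x ≥ 0)
    (hP4 : ∀ (g : ↥(Metric.closedBall (0 : C(K, ℝ)) 1)) (x : K), IsOpen ({x} : Set K) →
      (g : C(K, ℝ)) x < 0 → (Ψ g : C(K, ℝ)) x < 0)
    (hP5 : ∀ (g : ↥(Metric.closedBall (0 : C(K, ℝ)) 1)) (x : K), IsOpen ({x} : Set K) →
      (g : C(K, ℝ)) x > 0 → (Ψ g : C(K, ℝ)) x > 0)
    (hP6 : ∀ g : ↥(Metric.closedBall (0 : C(K, ℝ)) 1),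
      (∀ x : K, |(g : C(K, ℝ)) x| = 1) → Φ g = g)
    (N : ℕ) (V : Fin N → Set K)
    (hVclopen : ∀ i, IsClopen (V i))
    (hVdisj : ∀ i j, i ≠ j → Disjoint (V i) (V j))
    (hVmeet : ∀ i, (V i ∩ {x : K | ¬ IsOpen ({x} : Set K)}).Nonempty)
    (hVcover : {x : K | ¬ IsOpen ({x} : Set K)} ⊆ ⋃ i, V i)
    (h : Fin N → ℝ) (hrange : ∀ i, h i ∈ Set.Icc (-1 : ℝ) 1)
    (hmin : sInf (Set.range fun i => |h i|) ≠ 0)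
    (hstable : Φ '' {f : ↥(Metric.closedBall (0 : C(K, ℝ)) 1) |
        ∀ i, ∀ x ∈ V i, (f : C(K, ℝ)) x = h i} =
      {f : ↥(Metric.closedBall (0 : C(K, ℝ)) 1) | ∀ i, ∀ x ∈ V i, (f : C(K, ℝ)) x = h i})
    (f : ↥(Metric.closedBall (0 : C(K, ℝ)) 1))
    (hf : ∀ i, ∀ x ∈ V i, (f : C(K, ℝ)) x = h i) :
    Φ f = f := by
  classical
  set S := {f : ↥(Metric.closedBall (0 : C(K, ℝ)) 1) |
      ∀ i, ∀ x ∈ V i, (f : C(K, ℝ)) x = h i} with hSdef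
  -- points outside ⋃ V are isolated
  have hWopen : ∀ z : K, z ∉ (⋃ i, V i) → IsOpen ({z} : Set K) := by
    intro z hz
    by_contra hno
    exact hz (hVcover hno)
  have hWcl : ∀ z : K, z ∉ (⋃ i, V i) → IsClopen ({z} : Set K) :=
    fun z hz => ⟨isClosed_singleton, hWopen z hz⟩
  -- the complement of ⋃ V is finite
  have hWfin : Set.Finite ((⋃ i, V i)ᶜ) := by
    have hopen : IsOpen (⋃ i, V i) := isOpen_iUnion fun i => (hVclopen i).2
    have hcpt : IsCompact ((⋃ i, V i)ᶜ) := hopen.isClosed_compl.isCompact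
    obtain ⟨t, ht⟩ := hcpt.elim_finite_subcover
      (fun y : ↥((⋃ i, V i)ᶜ) => ({y.1} : Set K))
      (fun y => hWopen y.1 y.2) (fun z hz => Set.mem_iUnion.mpr ⟨⟨z, hz⟩, rfl⟩)
    apply Set.Finite.subset _ ht
    exact t.finite_toSet.biUnion fun y _ => Set.finite_singleton y.1
  -- S is compact
  have hSc : IsCompact S := S_isCompact hVclopen hVdisj hrange hWfin hWcl
  -- Φ maps S to S
  have hΦmaps : ∀ g, g ∈ S → Φ g ∈ S := by
    intro g hg
    rw [← hstable]
    exact ⟨g, hg, rfl⟩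
  -- nonexpansive on S
  have hne : ∀ a ∈ S, ∀ b ∈ S, dist (Φ a) (Φ b) ≤ dist a b := by
    intro a _ b _
    have := hlip.dist_le_mul a b
    simpa using this
  have hiso : ∀ a ∈ S, ∀ b ∈ S, dist (Φ a) (Φ b) = dist a b := fun a ha b hb =>
    le_antisymm (hne a ha b hb) (aux_isometry_of_compact hSc hstable hne a ha b hb)
  have hfS : f ∈ S := hf
  have hΦf : Φ f ∈ S := hΦmaps f hfS
  apply Subtype.ext
  apply ContinuousMap.ext
  intro x
  by_cases hx : x ∈ ⋃ i, V i
  · obtain ⟨i, hxi⟩ := Set.mem_iUnion.mp hx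
    rw [hΦf i x hxi, hf i x hxi]
  · -- the main case : x is an isolated point outside all V i
    have hxcl : IsClopen ({x} : Set K) := hWcl x hx
    have hxopen : IsOpen ({x} : Set K) := hWopen x hx
    -- the test functions U t
    have hUball : ∀ t ∈ Set.Icc (-1 : ℝ) 1,
        uFun N V hVclopen h x hxcl t ∈ Metric.closedBall (0 : C(K, ℝ)) 1 := by
      intro t ht
      apply mem_ball_of_pt
      intro z
      by_cases hz : z ∈ ⋃ i, V i
      · obtain ⟨j, hzj⟩ := Set.mem_iUnion.mp hz
        rw [uFun_apply_V hVclopen h hxcl t hVdisj hx hzj]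
        exact abs_le.mpr ⟨(hrange j).1, (hrange j).2⟩
      · by_cases hzx : z = x
        · subst hzx
          rw [uFun_apply_self hVclopen h hxcl t hx]
          exact abs_le.mpr ht
        · rw [uFun_apply_zero hVclopen h hxcl t hz hzx]
          simp
    set U : ∀ t ∈ Set.Icc (-1 : ℝ) 1, ↥(Metric.closedBall (0 : C(K, ℝ)) 1) :=
      fun t ht => ⟨uFun N V hVclopen h x hxcl t, hUball t ht⟩ with hUdef
    have hUS : ∀ t (ht : t ∈ Set.Icc (-1 : ℝ) 1), U t ht ∈ S := by
      intro t ht i z hzi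
      exact uFun_apply_V hVclopen h hxcl t hVdisj hx hzi
    have h0I : (0 : ℝ) ∈ Set.Icc (-1 : ℝ) 1 := ⟨by norm_num, by norm_num⟩
    -- Φ fixes U 0
    have hU0fix : Φ (U 0 h0I) = U 0 h0I := by
      have hmem : Φ (U 0 h0I) ∈ S := hΦmaps _ (hUS 0 h0I)
      apply Subtype.ext
      apply ContinuousMap.ext
      intro z
      by_cases hz : z ∈ ⋃ i, V i
      · obtain ⟨j, hzj⟩ := Set.mem_iUnion.mp hz
        rw [hmem j z hzj]
        exact (uFun_apply_V hVclopen h hxcl 0 hVdisj hx hzj).symm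
      · have hz0 : (U 0 h0I : C(K, ℝ)) z = 0 := by
          by_cases hzx : z = x
          · subst hzx
            exact uFun_apply_self hVclopen h hxcl 0 hx
          · exact uFun_apply_zero hVclopen h hxcl 0 hz hzx
        rw [hP1 _ z (hWopen z hz) hz0, hz0]
    -- Φ fixes every U t
    have hUfix : ∀ t (ht : t ∈ Set.Icc (-1 : ℝ) 1), Φ (U t ht) = U t ht := by
      intro t ht
      have hmem : Φ (U t ht) ∈ S := hΦmaps _ (hUS t ht)
      -- distance from U t to U 0 is |t|
      have hdist0 : dist (U t ht) (U 0 h0I) = |t| := by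
        rw [Subtype.dist_eq]
        apply le_antisymm
        · apply u_dist_le hVdisj hx (hUS t ht) (abs_nonneg t)
          · rw [uFun_apply_self hVclopen h hxcl t hx, sub_zero]
          · intro z hz hzx
            rw [uFun_apply_zero hVclopen h hxcl t hz hzx]
            simp [abs_nonneg]
        · have := u_dist_ge (hV := hVclopen) (h := h) (hx := hxcl) hx
            (uFun N V hVclopen h x hxcl t) 0
          rwa [uFun_apply_self hVclopen h hxcl t hx, sub_zero] at this
      have hdistΦ : dist (Φ (U t ht)) (U 0 h0I) = |t| := by
        rw [← hU0fix, hiso _ (hUS t ht) _ (hUS 0 h0I), hdist0]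
      -- |Φ(U t) x| = |t|
      have habs_le : |(Φ (U t ht) : C(K, ℝ)) x| ≤ |t| := by
        have := u_dist_ge (hV := hVclopen) (h := h) (hx := hxcl) hx
          ((Φ (U t ht) : C(K, ℝ))) 0
        rw [sub_zero] at this
        rw [Subtype.dist_eq] at hdistΦ
        exact le_trans this (le_of_eq hdistΦ)
      have habs_ge : |t| ≤ |(Φ (U t ht) : C(K, ℝ)) x| := by
        rw [← hdistΦ, Subtype.dist_eq]
        apply u_dist_le hVdisj hx hmem (abs_nonneg _)
        · rw [sub_zero]
        · intro z hz hzx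
          have hz0 : (U t ht : C(K, ℝ)) z = 0 :=
            uFun_apply_zero hVclopen h hxcl t hz hzx
          rw [hP1 _ z (hWopen z hz) hz0]
          simp [abs_nonneg]
      have habs : |(Φ (U t ht) : C(K, ℝ)) x| = |t| := le_antisymm habs_le habs_ge
      -- the value at x is t
      have hval : (Φ (U t ht) : C(K, ℝ)) x = t := by
        have hUx : (U t ht : C(K, ℝ)) x = t := uFun_apply_self hVclopen h hxcl t hx
        rcases lt_trichotomy t 0 with htneg | htzero | htpos
        · have hs := hP2 _ x hxopen (by rw [hUx]; exact htneg)
          rcases abs_cases ((Φ (U t ht) : C(K, ℝ)) x) with ⟨he, _⟩ | ⟨he, _⟩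
          · rw [he, abs_of_neg htneg] at habs; linarith
          · rw [he, abs_of_neg htneg] at habs; linarith
        · subst htzero
          rw [abs_zero, abs_eq_zero] at habs
          exact habs
        · have hs := hP3 _ x hxopen (by rw [hUx]; exact htpos)
          rcases abs_cases ((Φ (U t ht) : C(K, ℝ)) x) with ⟨he, _⟩ | ⟨he, _⟩
          · rw [he, abs_of_pos htpos] at habs; linarith
          · rw [he, abs_of_pos htpos] at habs; linarith
      -- conclude
      apply Subtype.ext
      apply ContinuousMap.ext
      intro z
      by_cases hz : z ∈ ⋃ i, V i
      · obtain ⟨j, hzj⟩ := Set.mem_iUnion.mp hz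
        rw [hmem j z hzj, hUS t ht j z hzj]
      · by_cases hzx : z = x
        · subst hzx
          rw [hval, uFun_apply_self hVclopen h hxcl t hx]
        · have hz0 : (U t ht : C(K, ℝ)) z = 0 :=
            uFun_apply_zero hVclopen h hxcl t hz hzx
          rw [hP1 _ z (hWopen z hz) hz0, hz0]
    -- equal distances to all U t
    have hd : ∀ t ∈ Set.Icc (-1 : ℝ) 1,
        dist (f : C(K, ℝ)) (uFun N V hVclopen h x hxcl t)
          = dist (Φ f : C(K, ℝ)) (uFun N V hVclopen h x hxcl t) := by
      intro t ht
      have := hiso f hfS (U t ht) (hUS t ht)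
      rw [hUfix t ht] at this
      rw [Subtype.dist_eq, Subtype.dist_eq] at this
      exact this.symm
    -- finish by the determination lemma
    rcases lt_trichotomy ((Φ f : C(K, ℝ)) x) ((f : C(K, ℝ)) x) with hlt | heq | hgt
    · exact absurd hlt (fun hlt => determination hVdisj hx (Φ f) f hΦf hf
        (fun t ht => (hd t ht).symm) hlt)
    · exact heq
    · exact absurd hgt (fun hgt => determination hVdisj hx f (Φ f) hf hΦf
        (fun t ht => hd t ht) hgt)
end
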